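/- arXiv:1106.3468 — 9 statements merged into one kernel-verified Lean document; each statement's English description precedes it below -/
import Mathlib

section
/- Let α : I → R⁵₂ be a null Cartan curve with degeneration degree two, nullity degree sequence {0,1,2,2,1,0}, Cartan frame {L₁, L₂, W₃, N₂, N₁} and curvatures k₁, k₂. Suppose ᾱ : Ī → R⁵₂ is a smooth curve, φ : I → Ī is a smooth map with φ′(s) ≠ 0 for all s ∈ I, and μ : I → ℝ is a smooth function with μ(s) ≠ 0 for all s, such that ᾱ(φ(s)) = α(s) + μ(s)·W₃(s) for all s ∈ I, and suppose that for all s̄ ∈ Ī one has ⟨ᾱ′(s̄), ᾱ′(s̄)⟩ = 0, ⟨ᾱ″(s̄), ᾱ″(s̄)⟩ = 0, ⟨ᾱ′(s̄), ᾱ″(s̄)⟩ = 0, and that ⟨W₃(s), ᾱ′(φ(s))⟩ = 0 for all s ∈ I. Then μ is constant on I, k₁(s) = 0 for all s ∈ I, and k₂(s) = 0 for all s ∈ I. -/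
/-- The index-two pseudo-Euclidean inner product on `ℝⁿ`:
`⟨x,y⟩ = -x¹y¹ - x²y² + x³y³ + ⋯ + xⁿyⁿ`. -/
def mInner {n : ℕ} (x y : Fin n → ℝ) : ℝ :=
  ∑ i : Fin n, (if i.val < 2 then (-1 : ℝ) else 1) * x i * y i

lemma mInner_comm {n : ℕ} (x y : Fin n → ℝ) : mInner x y = mInner y x := by
  unfold mInner; apply Finset.sum_congr rfl; intros; ring

lemma mInner_add_left {n : ℕ} (x y z : Fin n → ℝ) :
    mInner (x + y) z = mInner x z + mInner y z := by
  unfold mInner; rw [← Finset.sum_add_distrib]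
  apply Finset.sum_congr rfl; intros; simp only [Pi.add_apply, Pi.sub_apply]; split_ifs <;> ring

lemma mInner_smul_left {n : ℕ} (c : ℝ) (x z : Fin n → ℝ) :
    mInner (c • x) z = c * mInner x z := by
  unfold mInner; rw [Finset.mul_sum]
  apply Finset.sum_congr rfl; intros; simp only [Pi.smul_apply, smul_eq_mul]; split_ifs <;> ring

lemma mInner_add_right {n : ℕ} (x y z : Fin n → ℝ) :
    mInner x (y + z) = mInner x y + mInner x z := by
  rw [mInner_comm, mInner_add_left, mInner_comm y x, mInner_comm z x]

lemma mInner_smul_right {n : ℕ} (c : ℝ) (x z : Fin n → ℝ) :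
    mInner x (c • z) = c * mInner x z := by
  rw [mInner_comm, mInner_smul_left, mInner_comm z x]

/-- **Bertrand curves in R⁵₂, necessity.**
If a null Cartan curve `α` in `R⁵₂` (degeneration degree two, nullity degree sequence
`{0,1,2,2,1,0}`) admits a mate `β` with `β (φ s) = α s + μ s • W₃ s`, where `β` is a null
curve (with null second derivative and `⟨β′,β″⟩ = 0`) whose tangent stays orthogonal to
`W₃`, then `μ` is constant on `I` and the curvatures `k₁, k₂` of `α` vanish on `I`. -/
theorem bertrand_necessity
    (I J : Set ℝ) (hI : IsOpen I) (hIconn : I.OrdConnected) (hJ : IsOpen J)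
    (α L1 L2 W3 N2 N1 : ℝ → Fin 5 → ℝ) (k1 k2 : ℝ → ℝ)
    -- smoothness
    (hαs : ContDiff ℝ (⊤ : ℕ∞) α) (hL1s : ContDiff ℝ (⊤ : ℕ∞) L1) (hL2s : ContDiff ℝ (⊤ : ℕ∞) L2)
    (hW3s : ContDiff ℝ (⊤ : ℕ∞) W3) (hN2s : ContDiff ℝ (⊤ : ℕ∞) N2) (hN1s : ContDiff ℝ (⊤ : ℕ∞) N1)
    (hk1s : ContDiff ℝ (⊤ : ℕ∞) k1) (hk2s : ContDiff ℝ (⊤ : ℕ∞) k2)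
    -- Cartan equations of α on I
    (hα : ∀ s ∈ I, deriv α s = L1 s)
    (hL1 : ∀ s ∈ I, deriv L1 s = L2 s)
    (hL2 : ∀ s ∈ I, deriv L2 s = W3 s)
    (hW3 : ∀ s ∈ I, deriv W3 s = -(k1 s) • L2 s + N2 s)
    (hN2 : ∀ s ∈ I, deriv N2 s = k2 s • L1 s + N1 s - k1 s • W3 s)
    (hN1 : ∀ s ∈ I, deriv N1 s = k2 s • L2 s)
    -- metric relations of the Cartan frame
    (hL1L1 : ∀ s ∈ I, mInner (L1 s) (L1 s) = 0)
    (hL2L2 : ∀ s ∈ I, mInner (L2 s) (L2 s) = 0)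
    (hN1N1 : ∀ s ∈ I, mInner (N1 s) (N1 s) = 0)
    (hN2N2 : ∀ s ∈ I, mInner (N2 s) (N2 s) = 0)
    (hL1N1 : ∀ s ∈ I, mInner (L1 s) (N1 s) = 1)
    (hL2N2 : ∀ s ∈ I, mInner (L2 s) (N2 s) = -1)
    (hL1L2 : ∀ s ∈ I, mInner (L1 s) (L2 s) = 0)
    (hL1N2 : ∀ s ∈ I, mInner (L1 s) (N2 s) = 0)
    (hL2N1 : ∀ s ∈ I, mInner (L2 s) (N1 s) = 0)
    (hN1N2 : ∀ s ∈ I, mInner (N1 s) (N2 s) = 0)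
    (hW3W3 : ∀ s ∈ I, mInner (W3 s) (W3 s) = 1)
    (hW3L1 : ∀ s ∈ I, mInner (W3 s) (L1 s) = 0)
    (hW3L2 : ∀ s ∈ I, mInner (W3 s) (L2 s) = 0)
    (hW3N1 : ∀ s ∈ I, mInner (W3 s) (N1 s) = 0)
    (hW3N2 : ∀ s ∈ I, mInner (W3 s) (N2 s) = 0)
    -- the mate data
    (β : ℝ → Fin 5 → ℝ) (φ μ : ℝ → ℝ)
    (hβs : ContDiff ℝ (⊤ : ℕ∞) β) (hφs : ContDiff ℝ (⊤ : ℕ∞) φ) (hμs : ContDiff ℝ (⊤ : ℕ∞) μ)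
    (hφI : Set.MapsTo φ I J)
    (hφ' : ∀ s ∈ I, deriv φ s ≠ 0)
    (hμ0 : ∀ s ∈ I, μ s ≠ 0)
    (hrel : ∀ s ∈ I, β (φ s) = α s + μ s • W3 s)
    (hβnull1 : ∀ t ∈ J, mInner (deriv β t) (deriv β t) = 0)
    (hβnull2 : ∀ t ∈ J, mInner (deriv (deriv β) t) (deriv (deriv β) t) = 0)
    (hβnull12 : ∀ t ∈ J, mInner (deriv β t) (deriv (deriv β) t) = 0)
    (horth : ∀ s ∈ I, mInner (W3 s) (deriv β (φ s)) = 0) :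
    (∃ c : ℝ, ∀ s ∈ I, μ s = c) ∧ (∀ s ∈ I, k1 s = 0) ∧ (∀ s ∈ I, k2 s = 0) := by
  -- differentiability of everything
  have dα := hαs.differentiable (by simp)
  have dL1 := hL1s.differentiable (by simp)
  have dL2 := hL2s.differentiable (by simp)
  have dW3 := hW3s.differentiable (by simp)
  have dN2 := hN2s.differentiable (by simp)
  have dN1 := hN1s.differentiable (by simp)
  have dμ := hμs.differentiable (by simp)
  have dφ := hφs.differentiable (by simp)
  have dβ := hβs.differentiable (by simp)
  have dβ' : Differentiable ℝ (deriv β) := by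
    have h2 : ContDiff ℝ (1 + 1) β := hβs.of_le (WithTop.coe_le_coe.mpr le_top)
    exact ((contDiff_succ_iff_deriv.mp h2).2.2).differentiable one_ne_zero
  have dφ' : Differentiable ℝ (deriv φ) := by
    have h2 : ContDiff ℝ (1 + 1) φ := hφs.of_le (WithTop.coe_le_coe.mpr le_top)
    exact ((contDiff_succ_iff_deriv.mp h2).2.2).differentiable one_ne_zero
  -- the composed curve and its first derivative
  have hcomp : ∀ s : ℝ, HasDerivAt (fun t => β (φ t)) (deriv φ s • deriv β (φ s)) s := by
    intro s
    have h : HasDerivAt (β ∘ φ) (deriv φ s • deriv β (φ s)) s :=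
      ((dβ (φ s)).hasDerivAt).scomp s (dφ s).hasDerivAt
    exact h
  -- first derivative identity on I
  have E1 : ∀ s ∈ I, deriv φ s • deriv β (φ s)
      = L1 s + (deriv μ s • W3 s + μ s • (-(k1 s) • L2 s + N2 s)) := by
    intro s hs
    have h2 : HasDerivAt (fun t => α t + μ t • W3 t)
        (L1 s + (deriv μ s • W3 s + μ s • (-(k1 s) • L2 s + N2 s))) s := by
      have h := (dα s).hasDerivAt.add (HasDerivAt.smul (dμ s).hasDerivAt (dW3 s).hasDerivAt)
      rw [hα s hs, hW3 s hs] at h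
      rw [add_comm (μ s • (-(k1 s) • L2 s + N2 s))] at h
      exact h
    have heq : (fun t => β (φ t)) =ᶠ[nhds s] fun t => α t + μ t • W3 t := by
      filter_upwards [hI.mem_nhds hs] with t ht using hrel t ht
    exact (hcomp s).unique (h2.congr_of_eventuallyEq heq)
  -- μ' = 0 on I
  have hμ' : ∀ s ∈ I, deriv μ s = 0 := by
    intro s hs
    have h := congrArg (fun v => mInner (W3 s) v) (E1 s hs)
    simp only [mInner_add_right, mInner_smul_right] at h
    rw [horth s hs, hW3W3 s hs, hW3L1 s hs, hW3L2 s hs, hW3N2 s hs] at h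
    linarith [h]
  -- k1 = 0 on I
  have hk1z : ∀ s ∈ I, k1 s = 0 := by
    intro s hs
    have h := congrArg (fun v => mInner v v) (E1 s hs)
    simp only [mInner_add_right, mInner_add_left, mInner_smul_right, mInner_smul_left] at h
    have c1 : mInner (L2 s) (L1 s) = 0 := by rw [mInner_comm]; exact hL1L2 s hs
    have c2 : mInner (N2 s) (L1 s) = 0 := by rw [mInner_comm]; exact hL1N2 s hs
    have c3 : mInner (N2 s) (L2 s) = -1 := by rw [mInner_comm]; exact hL2N2 s hs
    have c4 : mInner (L1 s) (W3 s) = 0 := by rw [mInner_comm]; exact hW3L1 s hs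
    have c5 : mInner (L2 s) (W3 s) = 0 := by rw [mInner_comm]; exact hW3L2 s hs
    have c6 : mInner (N2 s) (W3 s) = 0 := by rw [mInner_comm]; exact hW3N2 s hs
    simp only [hμ' s hs, hβnull1 (φ s) (hφI hs), hL1L1 s hs, hL2L2 s hs, hN2N2 s hs,
      hL1L2 s hs, hL1N2 s hs, hL2N2 s hs, hW3W3 s hs, hW3L1 s hs, hW3L2 s hs, hW3N2 s hs,
      c1, c2, c3, c4, c5, c6] at h
    have h2 : 2 * μ s ^ 2 * k1 s = 0 := by linear_combination -h
    have hμ2 : μ s ^ 2 ≠ 0 := pow_ne_zero 2 (hμ0 s hs)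
    rcases mul_eq_zero.mp h2 with h3 | h3
    · rcases mul_eq_zero.mp h3 with h4 | h4
      · norm_num at h4
      · exact absurd h4 hμ2
    · exact h3
  -- deriv of the composed curve equals L1 + μ • N2 on I
  have hF' : ∀ s ∈ I, deriv (fun t => β (φ t)) s = L1 s + μ s • N2 s := by
    intro s hs
    rw [(hcomp s).deriv, E1 s hs, hμ' s hs, hk1z s hs]
    simp
  -- second derivative: frame-side expression
  have E2 : ∀ s ∈ I,
      deriv (deriv φ) s • deriv β (φ s) + deriv φ s • (deriv φ s • deriv (deriv β) (φ s))
      = L2 s + μ s • (k2 s • L1 s + N1 s) := by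
    intro s hs
    -- deriv of (fun t => β (φ t)) agrees everywhere with g t := deriv φ t • deriv β (φ t)
    have hg : HasDerivAt (fun t => deriv φ t • deriv β (φ t))
        (deriv φ s • (deriv φ s • deriv (deriv β) (φ s)) + deriv (deriv φ) s • deriv β (φ s)) s :=
      HasDerivAt.smul (dφ' s).hasDerivAt
        (show HasDerivAt (fun t => deriv β (φ t)) (deriv φ s • deriv (deriv β) (φ s)) s from
          ((dβ' (φ s)).hasDerivAt).scomp s (dφ s).hasDerivAt)
    have hgF : (fun t => deriv φ t • deriv β (φ t)) = deriv (fun t => β (φ t)) := by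
      funext t; exact ((hcomp t).deriv).symm
    -- frame side: deriv F =ᶠ (fun t => L1 t + μ t • N2 t) near s
    have hf : HasDerivAt (fun t => L1 t + μ t • N2 t)
        (L2 s + (deriv μ s • N2 s + μ s • deriv N2 s)) s := by
      have h := (dL1 s).hasDerivAt.add (HasDerivAt.smul (dμ s).hasDerivAt (dN2 s).hasDerivAt)
      rw [hL1 s hs] at h
      rw [add_comm (μ s • deriv N2 s)] at h
      exact h
    have heq : deriv (fun t => β (φ t)) =ᶠ[nhds s] fun t => L1 t + μ t • N2 t := by
      filter_upwards [hI.mem_nhds hs] with t ht using hF' t ht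
    have hg' : HasDerivAt (fun t => L1 t + μ t • N2 t)
        (deriv φ s • (deriv φ s • deriv (deriv β) (φ s)) + deriv (deriv φ) s • deriv β (φ s)) s := by
      rw [hgF] at hg
      exact hg.congr_of_eventuallyEq heq.symm
    have huni := hg'.unique hf
    rw [hμ' s hs, hN2 s hs, hk1z s hs] at huni
    rw [add_comm (deriv (deriv φ) s • deriv β (φ s))]
    rw [huni]
    simp
  -- k2 = 0 on I
  have hk2z : ∀ s ∈ I, k2 s = 0 := by
    intro s hs
    have h := congrArg (fun v => mInner v v) (E2 s hs)
    simp only [mInner_add_right, mInner_add_left, mInner_smul_right, mInner_smul_left] at h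
    have c0 : mInner (deriv (deriv β) (φ s)) (deriv β (φ s)) = 0 := by
      rw [mInner_comm]; exact hβnull12 (φ s) (hφI hs)
    have c1 : mInner (L2 s) (L1 s) = 0 := by rw [mInner_comm]; exact hL1L2 s hs
    have c2 : mInner (N1 s) (L2 s) = 0 := by rw [mInner_comm]; exact hL2N1 s hs
    have c3 : mInner (N1 s) (L1 s) = 1 := by rw [mInner_comm]; exact hL1N1 s hs
    simp only [hβnull1 (φ s) (hφI hs), hβnull2 (φ s) (hφI hs), hβnull12 (φ s) (hφI hs),
      c0, c1, c2, c3, hL2L2 s hs, hL1L1 s hs, hN1N1 s hs, hL2N1 s hs, hL1N1 s hs,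
      hL1L2 s hs] at h
    have h2 : 2 * μ s ^ 2 * k2 s = 0 := by linear_combination -h
    have hμ2 : μ s ^ 2 ≠ 0 := pow_ne_zero 2 (hμ0 s hs)
    rcases mul_eq_zero.mp h2 with h3 | h3
    · rcases mul_eq_zero.mp h3 with h4 | h4
      · norm_num at h4
      · exact absurd h4 hμ2
    · exact h3
  refine ⟨?_, hk1z, hk2z⟩
  -- μ constant on I
  by_cases hne : I.Nonempty
  · obtain ⟨s₀, hs₀⟩ := hne
    refine ⟨μ s₀, fun s hs => ?_⟩
    apply Convex.is_const_of_fderivWithin_eq_zero hIconn.convex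
      (dμ.differentiableOn) ?_ hs hs₀
    intro x hx
    rw [fderivWithin_of_isOpen hI hx]
    have : HasDerivAt μ 0 x := by
      have := (dμ x).hasDerivAt
      rwa [hμ' x hx] at this
    have := this.hasFDerivAt.fderiv
    rw [this]
    ext
    simp
  · exact ⟨0, fun s hs => absurd ⟨s, hs⟩ hne⟩
end

section
/- Let α : I → R⁵₂ be a null Cartan curve with degeneration degree two, nullity degree sequence {0,1,2,2,1,0}, Cartan frame {L₁, L₂, W₃, N₂, N₁}, and curvatures satisfying k₁ ≡ 0 and k₂ ≡ 0 on I. Let μ be a nonzero real constant and define ᾱ(s) = α(s) + μ·W₃(s). Then for all s ∈ I: ᾱ′(s) = L₁(s) + μ·N₂(s) and ᾱ′(s) ≠ 0, ᾱ″(s) = L₂(s) + μ·N₁(s), and ᾱ‴(s) = W₃(s); in particular ⟨ᾱ′(s), ᾱ′(s)⟩ = 0, ⟨ᾱ″(s), ᾱ″(s)⟩ = 0, and ⟨ᾱ‴(s), ᾱ‴(s)⟩ = 1, so that s is a pseudo-arc parameter for ᾱ and the spacelike frame vector ᾱ‴ of ᾱ coincides with the spacelike frame vector W₃ of α (i.e.,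 ᾱ is a Bertrand mate of α). -/
/-- **Bertrand curves in R⁵₂, sufficiency.**
If `α` is a null Cartan curve in `R⁵₂` (degeneration degree two, nullity degree sequence
`{0,1,2,2,1,0}`) with `k₁ ≡ 0` and `k₂ ≡ 0` on `I`, `μ` is a nonzero real constant and
`β s = α s + μ • W₃ s`, then on `I` one has `β′ = L₁ + μ N₂ ≠ 0`, `β″ = L₂ + μ N₁`,
`β‴ = W₃`, and `⟨β′,β′⟩ = 0`, `⟨β″,β″⟩ = 0`, `⟨β‴,β‴⟩ = 1`; in particular the spacelike
frame vector `β‴` of the mate `β` coincides with `W₃`, so `β` is a Bertrand mate of `α`. -/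
theorem bertrand_sufficiency
    (I : Set ℝ) (hI : IsOpen I)
    (α L1 L2 W3 N2 N1 : ℝ → Fin 5 → ℝ) (k1 k2 : ℝ → ℝ)
    -- smoothness
    (hαs : ContDiff ℝ (⊤ : ℕ∞) α) (hL1s : ContDiff ℝ (⊤ : ℕ∞) L1) (hL2s : ContDiff ℝ (⊤ : ℕ∞) L2)
    (hW3s : ContDiff ℝ (⊤ : ℕ∞) W3) (hN2s : ContDiff ℝ (⊤ : ℕ∞) N2) (hN1s : ContDiff ℝ (⊤ : ℕ∞) N1)
    (hk1s : ContDiff ℝ (⊤ : ℕ∞) k1) (hk2s : ContDiff ℝ (⊤ : ℕ∞) k2)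
    -- Cartan equations of α on I
    (hα : ∀ s ∈ I, deriv α s = L1 s)
    (hL1 : ∀ s ∈ I, deriv L1 s = L2 s)
    (hL2 : ∀ s ∈ I, deriv L2 s = W3 s)
    (hW3 : ∀ s ∈ I, deriv W3 s = -(k1 s) • L2 s + N2 s)
    (hN2 : ∀ s ∈ I, deriv N2 s = k2 s • L1 s + N1 s - k1 s • W3 s)
    (hN1 : ∀ s ∈ I, deriv N1 s = k2 s • L2 s)
    -- metric relations of the Cartan frame
    (hL1L1 : ∀ s ∈ I, mInner (L1 s) (L1 s) = 0)
    (hL2L2 : ∀ s ∈ I, mInner (L2 s) (L2 s) = 0)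
    (hN1N1 : ∀ s ∈ I, mInner (N1 s) (N1 s) = 0)
    (hN2N2 : ∀ s ∈ I, mInner (N2 s) (N2 s) = 0)
    (hL1N1 : ∀ s ∈ I, mInner (L1 s) (N1 s) = 1)
    (hL2N2 : ∀ s ∈ I, mInner (L2 s) (N2 s) = -1)
    (hL1L2 : ∀ s ∈ I, mInner (L1 s) (L2 s) = 0)
    (hL1N2 : ∀ s ∈ I, mInner (L1 s) (N2 s) = 0)
    (hL2N1 : ∀ s ∈ I, mInner (L2 s) (N1 s) = 0)
    (hN1N2 : ∀ s ∈ I, mInner (N1 s) (N2 s) = 0)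
    (hW3W3 : ∀ s ∈ I, mInner (W3 s) (W3 s) = 1)
    (hW3L1 : ∀ s ∈ I, mInner (W3 s) (L1 s) = 0)
    (hW3L2 : ∀ s ∈ I, mInner (W3 s) (L2 s) = 0)
    (hW3N1 : ∀ s ∈ I, mInner (W3 s) (N1 s) = 0)
    (hW3N2 : ∀ s ∈ I, mInner (W3 s) (N2 s) = 0)
    -- vanishing curvatures
    (hk1 : ∀ s ∈ I, k1 s = 0)
    (hk2 : ∀ s ∈ I, k2 s = 0)
    -- the candidate Bertrand mate
    (μ : ℝ) (hμ : μ ≠ 0)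
    (β : ℝ → Fin 5 → ℝ) (hβ : ∀ s, β s = α s + μ • W3 s) :
    ∀ s ∈ I,
      deriv β s = L1 s + μ • N2 s ∧
      deriv β s ≠ 0 ∧
      deriv^[2] β s = L2 s + μ • N1 s ∧
      deriv^[3] β s = W3 s ∧
      mInner (deriv β s) (deriv β s) = 0 ∧
      mInner (deriv^[2] β s) (deriv^[2] β s) = 0 ∧
      mInner (deriv^[3] β s) (deriv^[3] β s) = 1 := by

  -- expand mInner on Fin 5
  have h2v : ((2:Fin 5)).val < 2 ↔ False := by decide
  have h3v : ((3:Fin 5)).val < 2 ↔ False := by decide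
  have h4v : ((4:Fin 5)).val < 2 ↔ False := by decide
  have h0v : ((0:Fin 5)).val < 2 ↔ True := by decide
  have h1v : ((1:Fin 5)).val < 2 ↔ True := by decide
  have hmlin : ∀ (x y : Fin 5 → ℝ) (c : ℝ),
      mInner (x + c • y) (x + c • y)
        = mInner x x + 2 * c * mInner x y + c ^ 2 * mInner y y := by
    intro x y c
    simp only [mInner, Fin.sum_univ_five, Pi.add_apply, Pi.smul_apply, smul_eq_mul,
      h0v, h1v, h2v, h3v, h4v, if_true, if_false]
    ring
  have hmadd : ∀ (x y z : Fin 5 → ℝ) (c : ℝ),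
      mInner (x + c • y) z = mInner x z + c * mInner y z := by
    intro x y z c
    simp only [mInner, Fin.sum_univ_five, Pi.add_apply, Pi.smul_apply, smul_eq_mul,
      h0v, h1v, h2v, h3v, h4v, if_true, if_false]
    ring
  have hmsymm : ∀ x y : Fin 5 → ℝ, mInner x y = mInner y x := by
    intro x y
    simp only [mInner, Fin.sum_univ_five, h0v, h1v, h2v, h3v, h4v, if_true, if_false]
    ring
  have hαd : Differentiable ℝ α := hαs.differentiable (by simp)
  have hL1d : Differentiable ℝ L1 := hL1s.differentiable (by simp)
  have hL2d : Differentiable ℝ L2 := hL2s.differentiable (by simp)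
  have hW3d : Differentiable ℝ W3 := hW3s.differentiable (by simp)
  have hN2d : Differentiable ℝ N2 := hN2s.differentiable (by simp)
  have hN1d : Differentiable ℝ N1 := hN1s.differentiable (by simp)
  have hβfun : β = fun s => α s + μ • W3 s := funext hβ
  have key1 : ∀ s ∈ I, deriv β s = L1 s + μ • N2 s := by
    intro s hs
    rw [hβfun, deriv_fun_add (hαd s) ((hW3d s).fun_const_smul μ),
      deriv_fun_const_smul μ (hW3d s), hα s hs, hW3 s hs, hk1 s hs]
    simp
  intro s hs
  have key2 : deriv^[2] β s = L2 s + μ • N1 s := by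
    have hev : deriv β =ᶠ[nhds s] fun t => L1 t + μ • N2 t :=
      Filter.eventuallyEq_of_mem (hI.mem_nhds hs) (fun t ht => key1 t ht)
    show deriv (deriv β) s = _
    rw [hev.deriv_eq, deriv_fun_add (hL1d s) ((hN2d s).fun_const_smul μ),
      deriv_fun_const_smul μ (hN2d s), hL1 s hs, hN2 s hs, hk1 s hs, hk2 s hs]
    simp
  have key3 : deriv^[3] β s = W3 s := by
    have key2' : ∀ t ∈ I, deriv^[2] β t = L2 t + μ • N1 t := by
      intro t ht
      have hev : deriv β =ᶠ[nhds t] fun u => L1 u + μ • N2 u :=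
        Filter.eventuallyEq_of_mem (hI.mem_nhds ht) (fun u hu => key1 u hu)
      show deriv (deriv β) t = _
      rw [hev.deriv_eq, deriv_fun_add (hL1d t) ((hN2d t).fun_const_smul μ),
        deriv_fun_const_smul μ (hN2d t), hL1 t ht, hN2 t ht, hk1 t ht, hk2 t ht]
      simp
    have hev2 : deriv^[2] β =ᶠ[nhds s] fun t => L2 t + μ • N1 t :=
      Filter.eventuallyEq_of_mem (hI.mem_nhds hs) (fun t ht => key2' t ht)
    show deriv (deriv^[2] β) s = _
    rw [hev2.deriv_eq, deriv_fun_add (hL2d s) ((hN1d s).fun_const_smul μ),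
      deriv_fun_const_smul μ (hN1d s), hL2 s hs, hN1 s hs, hk2 s hs]
    simp
  refine ⟨key1 s hs, ?_, key2, key3, ?_, ?_, ?_⟩
  · intro h0
    have h1 : mInner (deriv β s) (N1 s) = 1 := by
      rw [key1 s hs, hmadd, hL1N1 s hs, hmsymm, hN1N2 s hs]; ring
    rw [h0] at h1
    simp [mInner] at h1
  · rw [key1 s hs, hmlin, hL1L1 s hs, hN2N2 s hs, hL1N2 s hs]; ring
  · rw [key2, hmlin, hL2L2 s hs, hN1N1 s hs, hL2N1 s hs]; ring
  · rw [key3]; exact hW3W3 s hs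
end

section
/- Let α : ℝ → R⁵₂ be the curve α(s) = ((s − s⁵)/(4√15), (s² + s⁴)/(4√6), s³/6, (s² − s⁴)/(4√6), (s + s⁵)/(4√15)). Then for all s ∈ ℝ: α⁽⁶⁾(s) = 0; ⟨α′,α′⟩ = 0, ⟨α″,α″⟩ = 0, ⟨α′,α″⟩ = 0, ⟨α′,α‴⟩ = 0, ⟨α″,α‴⟩ = 0, ⟨α‴,α‴⟩ = 1, ⟨α⁽⁴⁾,α⁽⁴⁾⟩ = 0, ⟨α⁽⁵⁾,α⁽⁵⁾⟩ = 0, ⟨α‴,α⁽⁴⁾⟩ = 0, ⟨α‴,α⁽⁵⁾⟩ = 0, ⟨α⁽⁴⁾,α⁽⁵⁾⟩ = 0, ⟨α′,α⁽⁴⁾⟩ = 0, ⟨α″,α⁽⁵⁾⟩ = 0, ⟨α′,α⁽⁵⁾⟩ = 1 and ⟨α″,α⁽⁴⁾⟩ = −1. Consequently the fields L₁ = α′, L₂ = α″, W₃ = α‴, N₂ = α⁽⁴⁾, N₁ = α⁽⁵⁾ form a Cartan frame of α satisfying the Cartan equations with curvatures k₁ = k₂ = 0. -/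
/-!
Expanding `α(s) = ∑_{k ≤ 5} (sᵏ / k!) vₖ` with `vₖ = α⁽ᵏ⁾(0)`, differentiation shifts the
coefficients: `α⁽ⁿ⁾(s) = ∑_k (sᵏ / k!) v_{k+n}`. The coefficient vectors satisfy
`⟨vₖ, vₗ⟩ = (-1)^(k+1)` if `k + l = 6` and `0` otherwise, so `⟨α⁽ⁱ⁾, α⁽ʲ⁾⟩` is a multiple of
`s^(6-i-j)` by an alternating binomial sum, which vanishes unless `i + j = 6`.
-/

open Finset

noncomputable def mInnerForm (n : ℕ) : LinearMap.BilinForm ℝ (Fin n → ℝ) :=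
  LinearMap.mk₂ ℝ mInner
    (fun x y z => by simp only [mInner, Pi.add_apply, ← sum_add_distrib]; congr 1; ext; ring)
    (fun c x y => by simp only [mInner, Pi.smul_apply, smul_eq_mul, mul_sum]; congr 1; ext; ring)
    (fun x y z => by simp only [mInner, Pi.add_apply, ← sum_add_distrib]; congr 1; ext; ring)
    (fun c x y => by simp only [mInner, Pi.smul_apply, smul_eq_mul, mul_sum]; congr 1; ext; ring)

section TaylorCurve

variable {E : Type*} [NormedAddCommGroup E] [NormedSpace ℝ E]

noncomputable def taylorCurve (v : ℕ → E) (N : ℕ) (s : ℝ) : E :=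
  ∑ k ∈ range N, (s ^ k / k.factorial) • v k

theorem hasDerivAt_pow_div_factorial (k : ℕ) (s : ℝ) :
    HasDerivAt (fun t : ℝ => t ^ (k + 1) / (k + 1).factorial) (s ^ k / k.factorial) s := by
  refine ((hasDerivAt_pow (k + 1) s).div_const ((k + 1).factorial : ℝ)).congr_deriv ?_
  rw [Nat.factorial_succ]
  push_cast
  field_simp

theorem hasDerivAt_taylorCurve_succ (v : ℕ → E) (N : ℕ) (s : ℝ) :
    HasDerivAt (taylorCurve v (N + 1)) (taylorCurve (fun k => v (k + 1)) N s) s := by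
  have h : taylorCurve v (N + 1) = fun t : ℝ =>
      ∑ k ∈ range N, (t ^ (k + 1) / (k + 1).factorial) • v (k + 1) + v 0 := by
    funext t
    simp [taylorCurve, sum_range_succ']
  rw [h, taylorCurve]
  exact (HasDerivAt.fun_sum fun k _ => (hasDerivAt_pow_div_factorial k s).smul_const _).add_const _

theorem deriv_taylorCurve_succ (v : ℕ → E) (N : ℕ) :
    deriv (taylorCurve v (N + 1)) = taylorCurve (fun k => v (k + 1)) N :=
  funext fun s => (hasDerivAt_taylorCurve_succ v N s).deriv

theorem iterate_deriv_taylorCurve_add (v : ℕ → E) (N n : ℕ) :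
    deriv^[n] (taylorCurve v (N + n)) = taylorCurve (fun k => v (k + n)) N := by
  induction n generalizing v with
  | zero => rfl
  | succ n ih =>
    rw [Function.iterate_succ_apply, ← add_assoc, deriv_taylorCurve_succ, ih]
    simp only [add_assoc]

theorem iterate_deriv_taylorCurve (v : ℕ → E) {N n : ℕ} (h : n ≤ N) :
    deriv^[n] (taylorCurve v N) = taylorCurve (fun k => v (k + n)) (N - n) := by
  rw [← iterate_deriv_taylorCurve_add, Nat.sub_add_cancel h]

end TaylorCurve

theorem mInner_taylorCurve {n : ℕ} (v w : ℕ → Fin n → ℝ) (N M : ℕ) (s : ℝ) :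
    mInner (taylorCurve v N s) (taylorCurve w M s) =
      ∑ k ∈ range N, ∑ l ∈ range M,
        s ^ k / k.factorial * (s ^ l / l.factorial) * mInner (v k) (w l) := by
  change mInnerForm n _ _ = _
  simp only [taylorCurve, map_sum, LinearMap.sum_apply, map_smul, LinearMap.smul_apply,
    smul_eq_mul, mul_sum, mInnerForm, LinearMap.mk₂_apply]
  rw [sum_comm]
  exact sum_congr rfl fun k _ => sum_congr rfl fun l _ => by ring

noncomputable def bertrandCoeff : ℕ → Fin 5 → ℝ
  | 1 => ![1 / (4 * √15), 0, 0, 0, 1 / (4 * √15)]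
  | 2 => ![0, 1 / (2 * √6), 0, 1 / (2 * √6), 0]
  | 3 => ![0, 0, 1, 0, 0]
  | 4 => ![0, √6, 0, -√6, 0]
  | 5 => ![-(2 * √15), 0, 0, 0, 2 * √15]
  | _ => 0

theorem taylorCurve_bertrandCoeff (s : ℝ) :
    taylorCurve bertrandCoeff 6 s =
      ![(s - s ^ 5) / (4 * √15), (s ^ 2 + s ^ 4) / (4 * √6), s ^ 3 / 6,
        (s ^ 2 - s ^ 4) / (4 * √6), (s + s ^ 5) / (4 * √15)] := by
  have h6 : √6 ^ 2 = 6 := Real.sq_sqrt (by norm_num)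
  have h15 : √15 ^ 2 = 15 := Real.sq_sqrt (by norm_num)
  ext i
  fin_cases i <;> simp [taylorCurve, sum_range_succ, bertrandCoeff, Nat.factorial] <;>
    field_simp <;> simp only [h6, h15] <;> ring

theorem mInner_bertrandCoeff {k l : ℕ} (hk : k < 6) (hl : l < 6) :
    mInner (bertrandCoeff k) (bertrandCoeff l) = if k + l = 6 then (-1) ^ (k + 1) else 0 := by
  interval_cases k <;> interval_cases l <;>
    simp [mInner, Fin.sum_univ_five, bertrandCoeff] <;> field_simp <;> norm_num

/-- **The example of a Bertrand curve in R⁵₂.**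
For the null curve
`α(s) = ((s-s⁵)/(4√15), (s²+s⁴)/(4√6), s³/6, (s²-s⁴)/(4√6), (s+s⁵)/(4√15))`,
the 6th derivative vanishes and the derivatives `α′, α″, α‴, α⁽⁴⁾, α⁽⁵⁾` satisfy exactly
the metric relations of a Cartan frame `L₁ = α′, L₂ = α″, W₃ = α‴, N₂ = α⁽⁴⁾, N₁ = α⁽⁵⁾`
with curvatures `k₁ = k₂ = 0`. -/
theorem example_bertrand_curve
    (α : ℝ → Fin 5 → ℝ)
    (hα : ∀ s : ℝ, α s =
      ![(s - s^5) / (4 * Real.sqrt 15),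
        (s^2 + s^4) / (4 * Real.sqrt 6),
        s^3 / 6,
        (s^2 - s^4) / (4 * Real.sqrt 6),
        (s + s^5) / (4 * Real.sqrt 15)]) :
    ∀ s : ℝ,
      deriv^[6] α s = 0 ∧
      mInner (deriv α s) (deriv α s) = 0 ∧
      mInner (deriv^[2] α s) (deriv^[2] α s) = 0 ∧
      mInner (deriv α s) (deriv^[2] α s) = 0 ∧
      mInner (deriv α s) (deriv^[3] α s) = 0 ∧
      mInner (deriv^[2] α s) (deriv^[3] α s) = 0 ∧
      mInner (deriv^[3] α s) (deriv^[3] α s) = 1 ∧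
      mInner (deriv^[4] α s) (deriv^[4] α s) = 0 ∧
      mInner (deriv^[5] α s) (deriv^[5] α s) = 0 ∧
      mInner (deriv^[3] α s) (deriv^[4] α s) = 0 ∧
      mInner (deriv^[3] α s) (deriv^[5] α s) = 0 ∧
      mInner (deriv^[4] α s) (deriv^[5] α s) = 0 ∧
      mInner (deriv α s) (deriv^[4] α s) = 0 ∧
      mInner (deriv^[2] α s) (deriv^[5] α s) = 0 ∧
      mInner (deriv α s) (deriv^[5] α s) = 1 ∧
      mInner (deriv^[2] α s) (deriv^[4] α s) = -1 := by
  obtain rfl : α = taylorCurve bertrandCoeff 6 :=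
    funext fun s => (hα s).trans (taylorCurve_bertrandCoeff s).symm
  intro s
  have hderiv :
      deriv (taylorCurve bertrandCoeff 6) = taylorCurve (fun k => bertrandCoeff (k + 1)) 5 :=
    deriv_taylorCurve_succ bertrandCoeff 5
  simp (disch := norm_num) only [hderiv, iterate_deriv_taylorCurve, mInner_taylorCurve]
  simp (disch := norm_num) only [taylorCurve, Nat.reduceSub, range_zero, sum_empty, sum_range_succ,
    mInner_bertrandCoeff, Nat.reduceAdd, Nat.reduceEqDiff, ↓reduceIte, Nat.factorial, true_and]
  and_intros <;> ring
end

section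
/- Let α : I → Rⁿ₂ (n ≥ 8) be a null Cartan curve with degeneration degree two, nullity degree sequence {0,1,2,2,1,0,…,0}, Cartan frame {L₁, L₂, W₃, N₂, N₁, W₄, …, W₍ₙ₋₂₎} and curvatures k₁, …, k₍ₙ₋₃₎ with kᵢ(t) ≠ 0 for 3 ≤ i ≤ n−3 and all t, and let a₁, …, a₍ₙ₋₄₎ be the associated functions. If there exist ξ₀ ∈ Rⁿ₂ and r > 0 such that ⟨ξ₀ − α(t), ξ₀ − α(t)⟩ = r² for all t ∈ I, then ξ₀ − α(t) = Σ_{i=2}^{n−4} aᵢ(t)·W₍ᵢ₊₂₎(t) for all t ∈ I. -/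
namespace MAux

lemma mInner_comm {n : ℕ} (x y : Fin n → ℝ) : mInner x y = mInner y x := by
  unfold mInner; exact Finset.sum_congr rfl fun i _ => by ring

lemma mInner_add_left {n : ℕ} (x y z : Fin n → ℝ) :
    mInner (x + y) z = mInner x z + mInner y z := by
  unfold mInner; rw [← Finset.sum_add_distrib]
  exact Finset.sum_congr rfl fun i _ => by
    simp only [Pi.add_apply]; split <;> ring

lemma mInner_sub_left {n : ℕ} (x y z : Fin n → ℝ) :
    mInner (x - y) z = mInner x z - mInner y z := by
  unfold mInner; rw [← Finset.sum_sub_distrib]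
  exact Finset.sum_congr rfl fun i _ => by
    simp only [Pi.sub_apply]; split <;> ring

lemma mInner_smul_left {n : ℕ} (c : ℝ) (x z : Fin n → ℝ) :
    mInner (c • x) z = c * mInner x z := by
  unfold mInner; rw [Finset.mul_sum]
  exact Finset.sum_congr rfl fun i _ => by
    simp only [Pi.smul_apply, smul_eq_mul]; split <;> ring

lemma mInner_neg_left {n : ℕ} (x z : Fin n → ℝ) : mInner (-x) z = -mInner x z := by
  unfold mInner; rw [← Finset.sum_neg_distrib]
  exact Finset.sum_congr rfl fun i _ => by
    simp only [Pi.neg_apply]; split <;> ring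

lemma mInner_neg_right {n : ℕ} (x z : Fin n → ℝ) : mInner x (-z) = -mInner x z := by
  rw [mInner_comm, mInner_neg_left, mInner_comm]

lemma mInner_sum_left {n : ℕ} {ι : Type*} (s : Finset ι) (f : ι → Fin n → ℝ) (z : Fin n → ℝ) :
    mInner (∑ i ∈ s, f i) z = ∑ i ∈ s, mInner (f i) z := by
  classical
  induction s using Finset.induction with
  | empty => simp [mInner]
  | insert _ _ h ih => rw [Finset.sum_insert h, Finset.sum_insert h, mInner_add_left, ih]

lemma hasDerivAt_mInner {n : ℕ} {f g : ℝ → Fin n → ℝ} {f' g' : Fin n → ℝ} {t : ℝ}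
    (hf : HasDerivAt f f' t) (hg : HasDerivAt g g' t) :
    HasDerivAt (fun s => mInner (f s) (g s)) (mInner f' (g t) + mInner (f t) g') t := by
  have h : ∀ i : Fin n, HasDerivAt
      (fun s => (if (i : ℕ) < 2 then (-1:ℝ) else 1) * f s i * g s i)
      ((if (i : ℕ) < 2 then (-1:ℝ) else 1) * (f' i * g t i + f t i * g' i)) t := by
    intro i
    have hfi : HasDerivAt (fun s => f s i) (f' i) t := (hasDerivAt_pi.1 hf) i
    have hgi : HasDerivAt (fun s => g s i) (g' i) t := (hasDerivAt_pi.1 hg) i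
    have h2 := (hfi.mul hgi).const_mul (if (i : ℕ) < 2 then (-1:ℝ) else 1)
    convert h2 using 2 with s
    · rfl
    · rfl
    simp only [Pi.mul_apply]
    ring
  have hsum := HasDerivAt.fun_sum (fun i (_ : i ∈ Finset.univ) => h i)
  convert hsum using 1
  · rfl
  · rfl
  · rfl
  simp only [mInner]
  rw [← Finset.sum_add_distrib]
  exact Finset.sum_congr rfl fun i _ => by ring

end MAux

/-- **Pseudo-spherical null curves in Rⁿ₂: position of the center.**
If the null Cartan curve `α` (degeneration degree two, nullity degree sequence
`{0,1,2,2,1,0,…,0}`) lies on the pseudo-sphere of radius `r` centered at `ξ₀`, then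
`ξ₀ - α(t) = ∑_{i=2}^{n-4} aᵢ(t) • W₍ᵢ₊₂₎(t)` on `I`. -/
theorem pseudoSpherical_center_expansion
    (n : ℕ) (hn : 8 ≤ n) (I : Set ℝ) (hI : IsOpen I)
    (α L1 L2 N2 N1 : ℝ → Fin n → ℝ) (W : ℕ → ℝ → Fin n → ℝ)
    (k a : ℕ → ℝ → ℝ)
    -- smoothness
    (hαs : ContDiff ℝ (⊤ : ℕ∞) α) (hL1s : ContDiff ℝ (⊤ : ℕ∞) L1) (hL2s : ContDiff ℝ (⊤ : ℕ∞) L2)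
    (hN2s : ContDiff ℝ (⊤ : ℕ∞) N2) (hN1s : ContDiff ℝ (⊤ : ℕ∞) N1)
    (hWs : ∀ i, ContDiff ℝ (⊤ : ℕ∞) (W i)) (hks : ∀ i, ContDiff ℝ (⊤ : ℕ∞) (k i))
    (has : ∀ i, ContDiff ℝ (⊤ : ℕ∞) (a i))
    -- the curvatures k₃,…,k₍ₙ₋₃₎ never vanish
    (hknz : ∀ i, 3 ≤ i → i ≤ n - 3 → ∀ t ∈ I, k i t ≠ 0)
    -- Cartan equations on I
    (hα : ∀ t ∈ I, deriv α t = L1 t)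
    (hL1 : ∀ t ∈ I, deriv L1 t = L2 t)
    (hL2 : ∀ t ∈ I, deriv L2 t = W 3 t)
    (hW3 : ∀ t ∈ I, deriv (W 3) t = -(k 1 t) • L2 t + N2 t)
    (hN2 : ∀ t ∈ I, deriv N2 t = k 2 t • L1 t + N1 t - k 1 t • W 3 t)
    (hN1 : ∀ t ∈ I, deriv N1 t = k 2 t • L2 t + k 3 t • W 4 t)
    (hW4 : ∀ t ∈ I, deriv (W 4) t = -(k 3 t) • L1 t + k 4 t • W 5 t)
    (hWi : ∀ i, 5 ≤ i → i ≤ n - 3 → ∀ t ∈ I,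
      deriv (W i) t = -(k (i - 1) t) • W (i - 1) t + k i t • W (i + 1) t)
    (hWlast : ∀ t ∈ I, deriv (W (n - 2)) t = -(k (n - 3) t) • W (n - 3) t)
    -- metric relations of the Cartan frame
    (hL1L1 : ∀ t ∈ I, mInner (L1 t) (L1 t) = 0)
    (hL2L2 : ∀ t ∈ I, mInner (L2 t) (L2 t) = 0)
    (hN1N1 : ∀ t ∈ I, mInner (N1 t) (N1 t) = 0)
    (hN2N2 : ∀ t ∈ I, mInner (N2 t) (N2 t) = 0)
    (hL1N1 : ∀ t ∈ I, mInner (L1 t) (N1 t) = 1)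
    (hL2N2 : ∀ t ∈ I, mInner (L2 t) (N2 t) = -1)
    (hL1L2 : ∀ t ∈ I, mInner (L1 t) (L2 t) = 0)
    (hL1N2 : ∀ t ∈ I, mInner (L1 t) (N2 t) = 0)
    (hL2N1 : ∀ t ∈ I, mInner (L2 t) (N1 t) = 0)
    (hN1N2 : ∀ t ∈ I, mInner (N1 t) (N2 t) = 0)
    (hWW : ∀ i j, 3 ≤ i → i ≤ n - 2 → 3 ≤ j → j ≤ n - 2 → ∀ t ∈ I,
      mInner (W i t) (W j t) = if i = j then 1 else 0)
    (hWL1 : ∀ i, 3 ≤ i → i ≤ n - 2 → ∀ t ∈ I, mInner (W i t) (L1 t) = 0)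
    (hWL2 : ∀ i, 3 ≤ i → i ≤ n - 2 → ∀ t ∈ I, mInner (W i t) (L2 t) = 0)
    (hWN1 : ∀ i, 3 ≤ i → i ≤ n - 2 → ∀ t ∈ I, mInner (W i t) (N1 t) = 0)
    (hWN2 : ∀ i, 3 ≤ i → i ≤ n - 2 → ∀ t ∈ I, mInner (W i t) (N2 t) = 0)
    -- the associated functions a₁,…,a₍ₙ₋₄₎
    (ha1 : ∀ t ∈ I, a 1 t = 0)
    (ha2 : ∀ t ∈ I, a 2 t = 1 / k 3 t)
    (ha3 : ∀ t ∈ I, a 3 t = -(deriv (k 3) t) / ((k 3 t) ^ 2 * k 4 t))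
    (hai : ∀ i, 5 ≤ i → i ≤ n - 3 → ∀ t ∈ I,
      a (i - 1) t = (deriv (a (i - 2)) t + a (i - 3) t * k (i - 1) t) / k i t)
    -- α lies on a pseudo-sphere
    (ξ₀ : Fin n → ℝ) (r : ℝ) (hr : 0 < r)
    (hsphere : ∀ t ∈ I, mInner (ξ₀ - α t) (ξ₀ - α t) = r ^ 2) :
    ∀ t ∈ I, ξ₀ - α t = ∑ i ∈ Finset.Icc 2 (n - 4), a i t • W (i + 2) t := by

  classical
  have hdAt : ∀ (f : ℝ → Fin n → ℝ), ContDiff ℝ (⊤ : ℕ∞) f → ∀ t : ℝ, HasDerivAt f (deriv f t) t :=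
    fun f hf t => (hf.differentiable (by simp) t).hasDerivAt
  have hdAtR : ∀ (f : ℝ → ℝ), ContDiff ℝ (⊤ : ℕ∞) f → ∀ t : ℝ, HasDerivAt f (deriv f t) t :=
    fun f hf t => (hf.differentiable (by simp) t).hasDerivAt
  set β : ℝ → Fin n → ℝ := fun s => ξ₀ - α s with hβdef
  have hβ' : ∀ t ∈ I, HasDerivAt β (-(L1 t)) t := by
    intro t ht
    have h := hdAt α hαs t
    rw [hα t ht] at h
    have h2 := (hasDerivAt_const t ξ₀).sub h
    rw [hβdef]
    rw [zero_sub] at h2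
    exact h2
  -- key differentiation step
  have key : ∀ (u u' : ℝ → Fin n → ℝ) (g g' : ℝ → ℝ),
      (∀ t ∈ I, HasDerivAt u (u' t) t) → (∀ t ∈ I, HasDerivAt g (g' t) t) →
      (∀ t ∈ I, mInner (u t) (β t) = g t) →
      ∀ t ∈ I, mInner (u' t) (β t) - mInner (u t) (L1 t) = g' t := by
    intro u u' g g' hu hg heq t ht
    have h1 := MAux.hasDerivAt_mInner (hu t ht) (hβ' t ht)
    have h2 : (fun s => mInner (u s) (β s)) =ᶠ[nhds t] g :=
      Filter.eventuallyEq_of_mem (hI.mem_nhds ht) (fun s hs => heq s hs)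
    have h3 : HasDerivAt g (mInner (u' t) (β t) + mInner (u t) (-(L1 t))) t :=
      h1.congr_of_eventuallyEq h2.symm
    have h4 := h3.unique (hg t ht)
    rw [MAux.mInner_neg_right] at h4
    linarith
  -- step 0 : ⟨L1, β⟩ = 0
  have hA : ∀ t ∈ I, mInner (L1 t) (β t) = 0 := by
    intro t ht
    have h := key β (fun s => -(L1 s)) (fun _ => r ^ 2) (fun _ => 0)
      hβ' (fun s _ => hasDerivAt_const s (r ^ 2)) hsphere t ht
    rw [MAux.mInner_neg_left, MAux.mInner_comm (β t) (L1 t)] at h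
    linarith
  -- step 1 : ⟨L2, β⟩ = 0
  have hL1d : ∀ t ∈ I, HasDerivAt L1 (L2 t) t := by
    intro t ht; have h := hdAt L1 hL1s t; rwa [hL1 t ht] at h
  have hB : ∀ t ∈ I, mInner (L2 t) (β t) = 0 := by
    intro t ht
    have h := key L1 L2 (fun _ => 0) (fun _ => 0)
      hL1d (fun s _ => hasDerivAt_const s 0) hA t ht
    rw [hL1L1 t ht] at h
    linarith
  -- step 2 : ⟨W3, β⟩ = 0
  have hL2d : ∀ t ∈ I, HasDerivAt L2 (W 3 t) t := by
    intro t ht; have h := hdAt L2 hL2s t; rwa [hL2 t ht] at h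
  have hC : ∀ t ∈ I, mInner (W 3 t) (β t) = 0 := by
    intro t ht
    have h := key L2 (W 3) (fun _ => 0) (fun _ => 0)
      hL2d (fun s _ => hasDerivAt_const s 0) hB t ht
    rw [MAux.mInner_comm (L2 t) (L1 t), hL1L2 t ht] at h
    linarith
  -- step 3 : ⟨N2, β⟩ = 0
  have hW3d : ∀ t ∈ I, HasDerivAt (W 3) (-(k 1 t) • L2 t + N2 t) t := by
    intro t ht; have h := hdAt (W 3) (hWs 3) t; rwa [hW3 t ht] at h
  have hD : ∀ t ∈ I, mInner (N2 t) (β t) = 0 := by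
    intro t ht
    have h := key (W 3) (fun s => -(k 1 s) • L2 s + N2 s) (fun _ => 0) (fun _ => 0)
      hW3d (fun s _ => hasDerivAt_const s 0) hC t ht
    rw [MAux.mInner_add_left, MAux.mInner_smul_left, hB t ht,
      hWL1 3 (by omega) (by omega) t ht] at h
    simp only [mul_zero, zero_add, sub_zero] at h
    exact h
  -- step 4 : ⟨N1, β⟩ = 0
  have hN2d : ∀ t ∈ I, HasDerivAt N2 (k 2 t • L1 t + N1 t - k 1 t • W 3 t) t := by
    intro t ht; have h := hdAt N2 hN2s t; rwa [hN2 t ht] at h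
  have hE : ∀ t ∈ I, mInner (N1 t) (β t) = 0 := by
    intro t ht
    have h := key N2 (fun s => k 2 s • L1 s + N1 s - k 1 s • W 3 s) (fun _ => 0) (fun _ => 0)
      hN2d (fun s _ => hasDerivAt_const s 0) hD t ht
    rw [MAux.mInner_sub_left, MAux.mInner_add_left, MAux.mInner_smul_left,
      MAux.mInner_smul_left, hA t ht, hC t ht,
      MAux.mInner_comm (N2 t) (L1 t), hL1N2 t ht] at h
    simp only [mul_zero, zero_add, sub_zero] at h
    exact h
  -- step 5 : ⟨W4, β⟩ = a 2
  have hN1d : ∀ t ∈ I, HasDerivAt N1 (k 2 t • L2 t + k 3 t • W 4 t) t := by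
    intro t ht; have h := hdAt N1 hN1s t; rwa [hN1 t ht] at h
  have hW4β : ∀ t ∈ I, mInner (W 4 t) (β t) = a 2 t := by
    intro t ht
    have h := key N1 (fun s => k 2 s • L2 s + k 3 s • W 4 s) (fun _ => 0) (fun _ => 0)
      hN1d (fun s _ => hasDerivAt_const s 0) hE t ht
    rw [MAux.mInner_add_left, MAux.mInner_smul_left, MAux.mInner_smul_left, hB t ht,
      MAux.mInner_comm (N1 t) (L1 t), hL1N1 t ht] at h
    have hk3 : k 3 t ≠ 0 := hknz 3 le_rfl (by omega) t ht
    rw [ha2 t ht]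
    field_simp
    linarith
  -- step 6 : ⟨W5, β⟩ = a 3
  have hW4d : ∀ t ∈ I, HasDerivAt (W 4) (-(k 3 t) • L1 t + k 4 t • W 5 t) t := by
    intro t ht; have h := hdAt (W 4) (hWs 4) t; rwa [hW4 t ht] at h
  have hW5β : ∀ t ∈ I, mInner (W 5 t) (β t) = a 3 t := by
    intro t ht
    have h := key (W 4) (fun s => -(k 3 s) • L1 s + k 4 s • W 5 s) (a 2)
      (fun s => deriv (a 2) s) hW4d (fun s _ => hdAtR (a 2) (has 2) s) hW4β t ht
    have hk3 : k 3 t ≠ 0 := hknz 3 le_rfl (by omega) t ht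
    have hk4 : k 4 t ≠ 0 := hknz 4 (by omega) (by omega) t ht
    have hder : deriv (a 2) t = -(deriv (k 3) t) / (k 3 t) ^ 2 := by
      have hEq : a 2 =ᶠ[nhds t] (fun s => (k 3 s)⁻¹) := by
        filter_upwards [hI.mem_nhds ht] with s hs
        rw [ha2 s hs, one_div]
      have hInv : HasDerivAt (fun s => (k 3 s)⁻¹) (-(deriv (k 3) t) / (k 3 t) ^ 2) t :=
        (hdAtR (k 3) (hks 3) t).inv hk3
      rw [hEq.deriv_eq, hInv.deriv]
    rw [MAux.mInner_add_left, MAux.mInner_smul_left, MAux.mInner_smul_left, hA t ht,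
      hWL1 4 (by omega) (by omega) t ht, hder] at h
    simp only [mul_zero, zero_add, sub_zero] at h
    rw [ha3 t ht]
    field_simp at h ⊢
    linear_combination h
  -- main induction : ⟨W i, β⟩ = a (i-2) for 4 ≤ i ≤ n-2
  have claim : ∀ i, 4 ≤ i → i ≤ n - 2 → ∀ t ∈ I, mInner (W i t) (β t) = a (i - 2) t := by
    intro i
    induction i using Nat.strong_induction_on with
    | _ i IH =>
      intro h4 hub t ht
      by_cases hi4 : i = 4
      · subst hi4; simpa using hW4β t ht
      by_cases hi5 : i = 5
      · subst hi5; simpa using hW5β t ht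
      · have h6 : 6 ≤ i := by omega
        have hWder : ∀ s ∈ I,
            HasDerivAt (W (i-1)) (-(k (i-2) s) • W (i-2) s + k (i-1) s • W i s) s := by
          intro s hs
          have h := hdAt (W (i-1)) (hWs (i-1)) s
          have h2 := hWi (i-1) (by omega) (by omega) s hs
          have e1 : i - 1 - 1 = i - 2 := by omega
          have e2 : i - 1 + 1 = i := by omega
          rw [h2, e1, e2] at h
          exact h
        have hprev : ∀ s ∈ I, mInner (W (i-1) s) (β s) = a (i-3) s := by
          intro s hs
          have h := IH (i-1) (by omega) (by omega) (by omega) s hs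
          have e : i - 1 - 2 = i - 3 := by omega
          rwa [e] at h
        have hprev2 : ∀ s ∈ I, mInner (W (i-2) s) (β s) = a (i-4) s := by
          intro s hs
          have h := IH (i-2) (by omega) (by omega) (by omega) s hs
          have e : i - 2 - 2 = i - 4 := by omega
          rwa [e] at h
        have h := key (W (i-1)) (fun s => -(k (i-2) s) • W (i-2) s + k (i-1) s • W i s)
          (a (i-3)) (fun s => deriv (a (i-3)) s)
          hWder (fun s _ => hdAtR (a (i-3)) (has (i-3)) s) hprev t ht
        rw [MAux.mInner_add_left, MAux.mInner_smul_left, MAux.mInner_smul_left,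
          hprev2 t ht, hWL1 (i-1) (by omega) (by omega) t ht] at h
        simp only [sub_zero] at h
        have hk : k (i-1) t ≠ 0 := hknz (i-1) (by omega) (by omega) t ht
        have hrec := hai (i-1) (by omega) (by omega) t ht
        have e1 : i - 1 - 1 = i - 2 := by omega
        have e2 : i - 1 - 2 = i - 3 := by omega
        have e3 : i - 1 - 3 = i - 4 := by omega
        rw [e1, e2, e3] at hrec
        rw [hrec, eq_div_iff hk]
        linear_combination h
  -- conclusion : pointwise linear algebra
  intro t ht
  set S : Fin n → ℝ := ∑ i ∈ Finset.Icc 2 (n - 4), a i t • W (i + 2) t with hSdef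
  have hbound : ∀ i ∈ Finset.Icc 2 (n - 4), 3 ≤ i + 2 ∧ i + 2 ≤ n - 2 := by
    intro i hi
    have h := Finset.mem_Icc.mp hi
    omega
  have hSL1 : mInner S (L1 t) = 0 := by
    rw [hSdef, MAux.mInner_sum_left]
    refine Finset.sum_eq_zero fun i hi => ?_
    obtain ⟨h1, h2⟩ := hbound i hi
    rw [MAux.mInner_smul_left, hWL1 (i+2) h1 h2 t ht, mul_zero]
  have hSL2 : mInner S (L2 t) = 0 := by
    rw [hSdef, MAux.mInner_sum_left]
    refine Finset.sum_eq_zero fun i hi => ?_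
    obtain ⟨h1, h2⟩ := hbound i hi
    rw [MAux.mInner_smul_left, hWL2 (i+2) h1 h2 t ht, mul_zero]
  have hSN1 : mInner S (N1 t) = 0 := by
    rw [hSdef, MAux.mInner_sum_left]
    refine Finset.sum_eq_zero fun i hi => ?_
    obtain ⟨h1, h2⟩ := hbound i hi
    rw [MAux.mInner_smul_left, hWN1 (i+2) h1 h2 t ht, mul_zero]
  have hSN2 : mInner S (N2 t) = 0 := by
    rw [hSdef, MAux.mInner_sum_left]
    refine Finset.sum_eq_zero fun i hi => ?_
    obtain ⟨h1, h2⟩ := hbound i hi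
    rw [MAux.mInner_smul_left, hWN2 (i+2) h1 h2 t ht, mul_zero]
  have hSW : ∀ j, 3 ≤ j → j ≤ n - 2 → mInner S (W j t) = (if 4 ≤ j then a (j-2) t else 0) := by
    intro j h3 hub
    rw [hSdef, MAux.mInner_sum_left]
    by_cases h4 : 4 ≤ j
    · rw [if_pos h4]
      rw [Finset.sum_eq_single_of_mem (j-2) (Finset.mem_Icc.mpr ⟨by omega, by omega⟩)]
      · rw [MAux.mInner_smul_left]
        have e : j - 2 + 2 = j := by omega
        rw [e, hWW j j h3 hub h3 hub t ht, if_pos rfl, mul_one]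
      · intro i hi hne
        obtain ⟨hb1, hb2⟩ := hbound i hi
        have hmem := Finset.mem_Icc.mp hi
        rw [MAux.mInner_smul_left, hWW (i+2) j hb1 hb2 h3 hub t ht,
          if_neg (by omega), mul_zero]
    · rw [if_neg h4]
      refine Finset.sum_eq_zero fun i hi => ?_
      obtain ⟨hb1, hb2⟩ := hbound i hi
      have hmem := Finset.mem_Icc.mp hi
      rw [MAux.mInner_smul_left, hWW (i+2) j hb1 hb2 h3 hub t ht,
        if_neg (by omega), mul_zero]
  have hβW : ∀ j, 3 ≤ j → j ≤ n - 2 →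
      mInner (W j t) (β t) = (if 4 ≤ j then a (j-2) t else 0) := by
    intro j h3 hub
    by_cases h4 : 4 ≤ j
    · rw [if_pos h4]; exact claim j h4 hub t ht
    · rw [if_neg h4]
      have hj3 : j = 3 := by omega
      subst hj3
      exact hC t ht
  set γ : Fin n → ℝ := β t - S with hγdef
  have hγL1 : mInner γ (L1 t) = 0 := by
    rw [hγdef, MAux.mInner_sub_left, MAux.mInner_comm (β t) (L1 t), hA t ht, hSL1, sub_zero]
  have hγL2 : mInner γ (L2 t) = 0 := by
    rw [hγdef, MAux.mInner_sub_left, MAux.mInner_comm (β t) (L2 t), hB t ht, hSL2, sub_zero]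
  have hγN1 : mInner γ (N1 t) = 0 := by
    rw [hγdef, MAux.mInner_sub_left, MAux.mInner_comm (β t) (N1 t), hE t ht, hSN1, sub_zero]
  have hγN2 : mInner γ (N2 t) = 0 := by
    rw [hγdef, MAux.mInner_sub_left, MAux.mInner_comm (β t) (N2 t), hD t ht, hSN2, sub_zero]
  have hγW : ∀ j, 3 ≤ j → j ≤ n - 2 → mInner γ (W j t) = 0 := by
    intro j h3 hub
    rw [hγdef, MAux.mInner_sub_left, MAux.mInner_comm (β t) (W j t),
      hβW j h3 hub, hSW j h3 hub, sub_self]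
  -- frame and dual frame
  set v : Fin n → Fin n → ℝ := fun j =>
    if (j:ℕ) = 0 then L1 t else if (j:ℕ) = 1 then N1 t else if (j:ℕ) = 2 then L2 t
    else if (j:ℕ) = 3 then N2 t else W ((j:ℕ) - 1) t with hvdef
  set d : Fin n → Fin n → ℝ := fun j =>
    if (j:ℕ) = 0 then N1 t else if (j:ℕ) = 1 then L1 t else if (j:ℕ) = 2 then -N2 t
    else if (j:ℕ) = 3 then -L2 t else W ((j:ℕ) - 1) t with hddef
  -- pairwise products (both orders) among the four special vectors
  have q1 : mInner (L1 t) (L1 t) = 0 := hL1L1 t ht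
  have q2 : mInner (L1 t) (N1 t) = 1 := hL1N1 t ht
  have q2' : mInner (N1 t) (L1 t) = 1 := by rw [MAux.mInner_comm]; exact q2
  have q3 : mInner (L1 t) (L2 t) = 0 := hL1L2 t ht
  have q3' : mInner (L2 t) (L1 t) = 0 := by rw [MAux.mInner_comm]; exact q3
  have q4 : mInner (L1 t) (N2 t) = 0 := hL1N2 t ht
  have q4' : mInner (N2 t) (L1 t) = 0 := by rw [MAux.mInner_comm]; exact q4
  have q5 : mInner (N1 t) (N1 t) = 0 := hN1N1 t ht
  have q6 : mInner (L2 t) (N1 t) = 0 := hL2N1 t ht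
  have q6' : mInner (N1 t) (L2 t) = 0 := by rw [MAux.mInner_comm]; exact q6
  have q7 : mInner (N1 t) (N2 t) = 0 := hN1N2 t ht
  have q7' : mInner (N2 t) (N1 t) = 0 := by rw [MAux.mInner_comm]; exact q7
  have q8 : mInner (L2 t) (L2 t) = 0 := hL2L2 t ht
  have q9 : mInner (L2 t) (N2 t) = -1 := hL2N2 t ht
  have q9' : mInner (N2 t) (L2 t) = -1 := by rw [MAux.mInner_comm]; exact q9
  have q10 : mInner (N2 t) (N2 t) = 0 := hN2N2 t ht
  have hvd : ∀ j kk : Fin n, mInner (v j) (d kk) = if j = kk then 1 else 0 := by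
    intro j kk
    have hjq : (j = kk) ↔ ((j:ℕ) = (kk:ℕ)) := Fin.ext_iff
    have hjn : (j:ℕ) < n := j.isLt
    have hkn : (kk:ℕ) < n := kk.isLt
    rw [hvdef, hddef]
    dsimp only
    rcases Nat.lt_or_ge (j:ℕ) 4 with hj4 | hj4
    · rcases Nat.lt_or_ge (kk:ℕ) 4 with hk4 | hk4
      · have hj : (j:ℕ) = 0 ∨ (j:ℕ) = 1 ∨ (j:ℕ) = 2 ∨ (j:ℕ) = 3 := by omega
        have hk : (kk:ℕ) = 0 ∨ (kk:ℕ) = 1 ∨ (kk:ℕ) = 2 ∨ (kk:ℕ) = 3 := by omega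
        rcases hj with h|h|h|h <;> rcases hk with g|g|g|g <;>
          simp [h, g, hjq, MAux.mInner_neg_right,
            q1, q2, q2', q3, q3', q4, q4', q5, q6, q6', q7, q7', q8, q9, q9', q10]
      · -- j small, kk large
        have hb1 : 3 ≤ (kk:ℕ) - 1 := by omega
        have hb2 : (kk:ℕ) - 1 ≤ n - 2 := by omega
        have hne : ¬ (j = kk) := by rw [hjq]; omega
        have w1 : mInner (L1 t) (W ((kk:ℕ)-1) t) = 0 := by
          rw [MAux.mInner_comm]; exact hWL1 _ hb1 hb2 t ht
        have w2 : mInner (N1 t) (W ((kk:ℕ)-1) t) = 0 := by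
          rw [MAux.mInner_comm]; exact hWN1 _ hb1 hb2 t ht
        have w3 : mInner (L2 t) (W ((kk:ℕ)-1) t) = 0 := by
          rw [MAux.mInner_comm]; exact hWL2 _ hb1 hb2 t ht
        have w4 : mInner (N2 t) (W ((kk:ℕ)-1) t) = 0 := by
          rw [MAux.mInner_comm]; exact hWN2 _ hb1 hb2 t ht
        have hk0 : ¬ ((kk:ℕ) = 0) := by omega
        have hk1 : ¬ ((kk:ℕ) = 1) := by omega
        have hk2 : ¬ ((kk:ℕ) = 2) := by omega
        have hk3 : ¬ ((kk:ℕ) = 3) := by omega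
        have hj' : (j:ℕ) = 0 ∨ (j:ℕ) = 1 ∨ (j:ℕ) = 2 ∨ (j:ℕ) = 3 := by omega
        rcases hj' with h|h|h|h <;>
          simp [h, hk0, hk1, hk2, hk3, hne, w1, w2, w3, w4]
    · rcases Nat.lt_or_ge (kk:ℕ) 4 with hk4 | hk4
      · -- j large, kk small
        have hb1 : 3 ≤ (j:ℕ) - 1 := by omega
        have hb2 : (j:ℕ) - 1 ≤ n - 2 := by omega
        have hne : ¬ (j = kk) := by rw [hjq]; omega
        have u1 : mInner (W ((j:ℕ)-1) t) (N1 t) = 0 := hWN1 _ hb1 hb2 t ht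
        have u2 : mInner (W ((j:ℕ)-1) t) (L1 t) = 0 := hWL1 _ hb1 hb2 t ht
        have u3 : mInner (W ((j:ℕ)-1) t) (N2 t) = 0 := hWN2 _ hb1 hb2 t ht
        have u4 : mInner (W ((j:ℕ)-1) t) (L2 t) = 0 := hWL2 _ hb1 hb2 t ht
        have hj0 : ¬ ((j:ℕ) = 0) := by omega
        have hj1 : ¬ ((j:ℕ) = 1) := by omega
        have hj2 : ¬ ((j:ℕ) = 2) := by omega
        have hj3 : ¬ ((j:ℕ) = 3) := by omega
        have hk' : (kk:ℕ) = 0 ∨ (kk:ℕ) = 1 ∨ (kk:ℕ) = 2 ∨ (kk:ℕ) = 3 := by omega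
        rcases hk' with g|g|g|g <;>
          simp [g, hj0, hj1, hj2, hj3, hne, MAux.mInner_neg_right, u1, u2, u3, u4]
      · -- both large
        have hbj1 : 3 ≤ (j:ℕ) - 1 := by omega
        have hbj2 : (j:ℕ) - 1 ≤ n - 2 := by omega
        have hbk1 : 3 ≤ (kk:ℕ) - 1 := by omega
        have hbk2 : (kk:ℕ) - 1 ≤ n - 2 := by omega
        have hj0 : ¬ ((j:ℕ) = 0) := by omega
        have hj1 : ¬ ((j:ℕ) = 1) := by omega
        have hj2 : ¬ ((j:ℕ) = 2) := by omega
        have hj3 : ¬ ((j:ℕ) = 3) := by omega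
        have hk0 : ¬ ((kk:ℕ) = 0) := by omega
        have hk1 : ¬ ((kk:ℕ) = 1) := by omega
        have hk2 : ¬ ((kk:ℕ) = 2) := by omega
        have hk3 : ¬ ((kk:ℕ) = 3) := by omega
        have hiff : ((j:ℕ) - 1 = (kk:ℕ) - 1) ↔ j = kk := by
          rw [hjq]; omega
        simp only [hj0, hj1, hj2, hj3, hk0, hk1, hk2, hk3, if_false]
        rw [hWW ((j:ℕ)-1) ((kk:ℕ)-1) hbj1 hbj2 hbk1 hbk2 t ht]
        simp [hiff]
  have hvγ : ∀ j : Fin n, mInner (v j) γ = 0 := by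
    intro j
    have c1 : mInner (L1 t) γ = 0 := by rw [MAux.mInner_comm]; exact hγL1
    have c2 : mInner (N1 t) γ = 0 := by rw [MAux.mInner_comm]; exact hγN1
    have c3 : mInner (L2 t) γ = 0 := by rw [MAux.mInner_comm]; exact hγL2
    have c4 : mInner (N2 t) γ = 0 := by rw [MAux.mInner_comm]; exact hγN2
    rw [hvdef]
    dsimp only
    by_cases h0 : (j:ℕ) = 0
    · simpa [h0] using c1
    by_cases h1 : (j:ℕ) = 1
    · simpa [h0, h1] using c2
    by_cases h2 : (j:ℕ) = 2
    · simpa [h0, h1, h2] using c3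
    by_cases h3 : (j:ℕ) = 3
    · simpa [h0, h1, h2, h3] using c4
    · have hb1 : 3 ≤ (j:ℕ) - 1 := by omega
      have hb2 : (j:ℕ) - 1 ≤ n - 2 := by have := j.isLt; omega
      have c5 : mInner (W ((j:ℕ)-1) t) γ = 0 := by
        rw [MAux.mInner_comm]; exact hγW _ hb1 hb2
      simpa [h0, h1, h2, h3] using c5
  -- matrix argument
  set ε : Fin n → ℝ := fun i => if (i:ℕ) < 2 then (-1:ℝ) else 1 with hεdef
  have hε : ∀ i, ε i ≠ 0 := by
    intro i; rw [hεdef]; dsimp only; split <;> norm_num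
  set A : Matrix (Fin n) (Fin n) ℝ := Matrix.of (fun j i => v j i) with hAdef
  set B : Matrix (Fin n) (Fin n) ℝ := Matrix.of (fun i kk => ε i * d kk i) with hBdef
  have hAB : A * B = 1 := by
    ext j kk
    have hent : (A * B) j kk = mInner (v j) (d kk) := by
      rw [Matrix.mul_apply]
      unfold mInner
      refine Finset.sum_congr rfl fun i _ => ?_
      rw [hAdef, hBdef, hεdef]
      simp only [Matrix.of_apply]
      ring
    rw [hent, hvd j kk, Matrix.one_apply]
  have hBA : B * A = 1 := mul_eq_one_comm.mp hAB
  have hμ : A.mulVec (fun i => ε i * γ i) = 0 := by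
    funext j
    have hent : A.mulVec (fun i => ε i * γ i) j = mInner (v j) γ := by
      simp only [Matrix.mulVec, dotProduct, hAdef, Matrix.of_apply]
      unfold mInner
      refine Finset.sum_congr rfl fun i _ => ?_
      rw [hεdef]
      ring
    rw [hent, hvγ j]
    rfl
  have hγ0 : γ = 0 := by
    have h := congrArg (fun w => B.mulVec w) hμ
    simp only [Matrix.mulVec_mulVec, hBA, Matrix.one_mulVec, Matrix.mulVec_zero] at h
    funext i
    have hi := congrFun h i
    have := mul_eq_zero.mp hi
    rcases this with h' | h'
    · exact absurd h' (hε i)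
    · exact h'
  have hfin : β t = S := sub_eq_zero.mp hγ0
  exact hfin
end

section
/- Let α : I → Rⁿ₂ (n ≥ 8) be a null Cartan curve with degeneration degree two, nullity degree sequence {0,1,2,2,1,0,…,0}, Cartan frame {L₁, L₂, W₃, N₂, N₁, W₄, …, W₍ₙ₋₂₎} and curvatures k₁, …, k₍ₙ₋₃₎ with kᵢ(t) ≠ 0 for 3 ≤ i ≤ n−3 and all t, and let a₁, …, a₍ₙ₋₄₎ be the associated functions. Then the curve σ(t) = α(t) + Σ_{i=2}^{n−4} aᵢ(t)·W₍ᵢ₊₂₎(t) satisfies σ′(t) = (a₍ₙ₋₅₎(t)·k₍ₙ₋₃₎(t) + a₍ₙ₋₄₎′(t))·W₍ₙ₋₂₎(t) for all t ∈ I. -/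
/-- **The derivative of the candidate center curve.**
For a null Cartan curve `α` in `Rⁿ₂` (degeneration degree two, nullity degree sequence
`{0,1,2,2,1,0,…,0}`, `kᵢ ≠ 0` for `3 ≤ i ≤ n-3`), the curve
`σ(t) = α(t) + ∑_{i=2}^{n-4} aᵢ(t) • W₍ᵢ₊₂₎(t)` satisfies
`σ′(t) = (a₍ₙ₋₅₎(t) k₍ₙ₋₃₎(t) + a₍ₙ₋₄₎′(t)) • W₍ₙ₋₂₎(t)` on `I`. -/
theorem center_curve_derivative
    (n : ℕ) (hn : 8 ≤ n) (I : Set ℝ) (hI : IsOpen I)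
    (α L1 L2 N2 N1 : ℝ → Fin n → ℝ) (W : ℕ → ℝ → Fin n → ℝ)
    (k a : ℕ → ℝ → ℝ)
    -- smoothness
    (hαs : ContDiff ℝ (⊤ : ℕ∞) α) (hL1s : ContDiff ℝ (⊤ : ℕ∞) L1) (hL2s : ContDiff ℝ (⊤ : ℕ∞) L2)
    (hN2s : ContDiff ℝ (⊤ : ℕ∞) N2) (hN1s : ContDiff ℝ (⊤ : ℕ∞) N1)
    (hWs : ∀ i, ContDiff ℝ (⊤ : ℕ∞) (W i)) (hks : ∀ i, ContDiff ℝ (⊤ : ℕ∞) (k i))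
    (has : ∀ i, ContDiff ℝ (⊤ : ℕ∞) (a i))
    -- the curvatures k₃,…,k₍ₙ₋₃₎ never vanish
    (hknz : ∀ i, 3 ≤ i → i ≤ n - 3 → ∀ t ∈ I, k i t ≠ 0)
    -- Cartan equations on I
    (hα : ∀ t ∈ I, deriv α t = L1 t)
    (hL1 : ∀ t ∈ I, deriv L1 t = L2 t)
    (hL2 : ∀ t ∈ I, deriv L2 t = W 3 t)
    (hW3 : ∀ t ∈ I, deriv (W 3) t = -(k 1 t) • L2 t + N2 t)
    (hN2 : ∀ t ∈ I, deriv N2 t = k 2 t • L1 t + N1 t - k 1 t • W 3 t)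
    (hN1 : ∀ t ∈ I, deriv N1 t = k 2 t • L2 t + k 3 t • W 4 t)
    (hW4 : ∀ t ∈ I, deriv (W 4) t = -(k 3 t) • L1 t + k 4 t • W 5 t)
    (hWi : ∀ i, 5 ≤ i → i ≤ n - 3 → ∀ t ∈ I,
      deriv (W i) t = -(k (i - 1) t) • W (i - 1) t + k i t • W (i + 1) t)
    (hWlast : ∀ t ∈ I, deriv (W (n - 2)) t = -(k (n - 3) t) • W (n - 3) t)
    -- metric relations of the Cartan frame
    (hL1L1 : ∀ t ∈ I, mInner (L1 t) (L1 t) = 0)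
    (hL2L2 : ∀ t ∈ I, mInner (L2 t) (L2 t) = 0)
    (hN1N1 : ∀ t ∈ I, mInner (N1 t) (N1 t) = 0)
    (hN2N2 : ∀ t ∈ I, mInner (N2 t) (N2 t) = 0)
    (hL1N1 : ∀ t ∈ I, mInner (L1 t) (N1 t) = 1)
    (hL2N2 : ∀ t ∈ I, mInner (L2 t) (N2 t) = -1)
    (hL1L2 : ∀ t ∈ I, mInner (L1 t) (L2 t) = 0)
    (hL1N2 : ∀ t ∈ I, mInner (L1 t) (N2 t) = 0)
    (hL2N1 : ∀ t ∈ I, mInner (L2 t) (N1 t) = 0)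
    (hN1N2 : ∀ t ∈ I, mInner (N1 t) (N2 t) = 0)
    (hWW : ∀ i j, 3 ≤ i → i ≤ n - 2 → 3 ≤ j → j ≤ n - 2 → ∀ t ∈ I,
      mInner (W i t) (W j t) = if i = j then 1 else 0)
    (hWL1 : ∀ i, 3 ≤ i → i ≤ n - 2 → ∀ t ∈ I, mInner (W i t) (L1 t) = 0)
    (hWL2 : ∀ i, 3 ≤ i → i ≤ n - 2 → ∀ t ∈ I, mInner (W i t) (L2 t) = 0)
    (hWN1 : ∀ i, 3 ≤ i → i ≤ n - 2 → ∀ t ∈ I, mInner (W i t) (N1 t) = 0)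
    (hWN2 : ∀ i, 3 ≤ i → i ≤ n - 2 → ∀ t ∈ I, mInner (W i t) (N2 t) = 0)
    -- the associated functions a₁,…,a₍ₙ₋₄₎
    (ha1 : ∀ t ∈ I, a 1 t = 0)
    (ha2 : ∀ t ∈ I, a 2 t = 1 / k 3 t)
    (ha3 : ∀ t ∈ I, a 3 t = -(deriv (k 3) t) / ((k 3 t) ^ 2 * k 4 t))
    (hai : ∀ i, 5 ≤ i → i ≤ n - 3 → ∀ t ∈ I,
      a (i - 1) t = (deriv (a (i - 2)) t + a (i - 3) t * k (i - 1) t) / k i t)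
    -- the candidate center curve σ
    (σ : ℝ → Fin n → ℝ)
    (hσ : ∀ t, σ t = α t + ∑ i ∈ Finset.Icc 2 (n - 4), a i t • W (i + 2) t) :
    ∀ t ∈ I, deriv σ t = (a (n - 5) t * k (n - 3) t + deriv (a (n - 4)) t) • W (n - 2) t := by
  intro t ht
  -- differentiability facts
  have dα : DifferentiableAt ℝ α t := (hαs.differentiable (by simp)) t
  have dW : ∀ i, DifferentiableAt ℝ (W i) t := fun i => ((hWs i).differentiable (by simp)) t
  have da : ∀ i, DifferentiableAt ℝ (a i) t := fun i => ((has i).differentiable (by simp)) t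
  have dk : ∀ i, DifferentiableAt ℝ (k i) t := fun i => ((hks i).differentiable (by simp)) t
  have hk : ∀ i, 3 ≤ i → i ≤ n - 3 → k i t ≠ 0 := fun i h1 h2 => hknz i h1 h2 t ht
  -- σ as a function
  have hσf : σ = fun s => α s + ∑ i ∈ Finset.Icc 2 (n - 4), a i s • W (i + 2) s :=
    funext hσ
  -- derivative of σ
  have hderiv : deriv σ t
      = L1 t + ∑ i ∈ Finset.Icc 2 (n - 4),
          (deriv (a i) t • W (i + 2) t + a i t • deriv (W (i + 2)) t) := by
    rw [hσf, deriv_fun_add dα (DifferentiableAt.fun_sum fun i _ => (da i).fun_smul (dW (i + 2))),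
      hα t ht, deriv_fun_sum (fun i _ => (da i).fun_smul (dW (i + 2)))]
    congr 1
    refine Finset.sum_congr rfl fun i _ => ?_
    rw [deriv_fun_smul (da i) (dW (i + 2))]
    module
  -- the key scalar recurrences
  have hF : ∀ m, 2 ≤ m → m ≤ n - 5 →
      a (m + 1) t * k (m + 2) t = deriv (a m) t + a (m - 1) t * k (m + 1) t := by
    intro m hm2 hmn
    by_cases hm : m = 2
    · subst hm
      have hk3 := hk 3 (by norm_num) (by omega)
      have hk4 := hk 4 (by norm_num) (by omega)
      have e2 : deriv (a 2) t = -(deriv (k 3) t) / (k 3 t) ^ 2 := by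
        have hev : a 2 =ᶠ[nhds t] fun s => 1 / k 3 s :=
          Filter.eventuallyEq_of_mem (hI.mem_nhds ht) ha2
        rw [hev.deriv_eq, deriv_fun_div (differentiableAt_const 1) (dk 3) hk3]
        simp
      have h1 : a (2 - 1) t = 0 := by norm_num [ha1 t ht]
      rw [ha3 t ht, e2, h1]
      field_simp
      ring
    · have h5 : 5 ≤ m + 2 := by omega
      have hle : m + 2 ≤ n - 3 := by omega
      have hrec := hai (m + 2) h5 hle t ht
      have hkm : k (m + 2) t ≠ 0 := hk (m + 2) (by omega) hle
      have e1 : m + 2 - 1 = m + 1 := by omega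
      have e2 : m + 2 - 2 = m := by omega
      have e3 : m + 2 - 3 = m - 1 := by omega
      rw [e1, e2, e3] at hrec
      rw [hrec]
      field_simp
  -- the telescoping computation
  have key : ∀ m, 2 ≤ m → m ≤ n - 5 →
      L1 t + ∑ i ∈ Finset.Icc 2 m,
          (deriv (a i) t • W (i + 2) t + a i t • deriv (W (i + 2)) t)
      = (a (m - 1) t * k (m + 1) t + deriv (a m) t) • W (m + 2) t
        + (a m t * k (m + 2) t) • W (m + 3) t := by
    intro m hm2
    induction m, hm2 using Nat.le_induction with
    | base =>
      intro _
      rw [Finset.Icc_self, Finset.sum_singleton, hW4 t ht]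
      have h1 : a (2 - 1) t = 0 := by norm_num [ha1 t ht]
      have h21 : a 2 t * k 3 t = 1 := by
        rw [ha2 t ht]
        field_simp [hk 3 (by norm_num) (by omega)]
      rw [h1]
      match_scalars
      · linear_combination -h21
      · ring
      · ring
    | succ m hm2 ih =>
      intro hmn
      have hmn' : m ≤ n - 5 := by omega
      rw [Finset.sum_Icc_succ_top (by omega : 2 ≤ m + 1), ← add_assoc, ih hmn',
        hWi (m + 3) (by omega) (by omega) t ht]
      have hFm := hF m hm2 hmn'
      simp only [show m + 3 - 1 = m + 2 from by omega, show m + 1 - 1 = m from rfl,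
        show m + 1 + 1 = m + 2 from rfl, show m + 1 + 2 = m + 3 from rfl,
        show m + 1 + 3 = m + 4 from rfl]
      match_scalars
      · linear_combination -hFm
      · ring
      · ring
  -- assemble
  have hFn := hF (n - 5) (by omega) le_rfl
  have e1 : n - 5 + 1 = n - 4 := by omega
  have e2 : n - 5 + 2 = n - 3 := by omega
  have e3 : n - 5 + 3 = n - 2 := by omega
  have e4 : n - 5 - 1 = n - 6 := by omega
  rw [e1, e2, e4] at hFn
  have ekey := key (n - 5) (by omega) le_rfl
  rw [e1, e2, e3, e4] at ekey
  have e5 : n - 4 = (n - 5) + 1 := by omega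
  rw [hderiv, e5, Finset.sum_Icc_succ_top (by omega : 2 ≤ n - 5 + 1), ← add_assoc, ekey]
  rw [e1, show n - 4 + 2 = n - 2 from by omega, hWlast t ht]
  match_scalars
  · linear_combination -hFn
  · ring
end

section
/- Let α : I → Rⁿ₂ (n ≥ 8) be a null Cartan curve with degeneration degree two, nullity degree sequence {0,1,2,2,1,0,…,0}, curvatures k₁, …, k₍ₙ₋₃₎ with kᵢ(t) ≠ 0 for 3 ≤ i ≤ n−3 and all t, and let a₁, …, a₍ₙ₋₄₎ be the associated functions. If the function Σ_{i=2}^{n−4} aᵢ² is constant on I, then a₍ₙ₋₄₎(t)·(a₍ₙ₋₄₎′(t) + k₍ₙ₋₃₎(t)·a₍ₙ₋₅₎(t)) = 0 for all t ∈ I. -/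
lemma tele_aux (F : ℕ → ℝ) : ∀ N : ℕ, ∑ j ∈ Finset.Icc 2 (2 + N), (F (j + 1) - F j) = F (2 + N + 1) - F 2 := by
  intro N
  induction N with
  | zero => simp
  | succ N ih =>
    rw [show 2 + (N + 1) = (2 + N) + 1 by omega,
      Finset.sum_Icc_succ_top (by omega : 2 ≤ 2 + N + 1), ih]
    ring

/-- **The telescoping identity for the associated functions.**
Let `k₁,…,k₍ₙ₋₃₎` be the curvatures of a null Cartan curve in `Rⁿ₂` (`n ≥ 8`) with
degeneration degree two and nullity degree sequence `{0,1,2,2,1,0,…,0}`, with `kᵢ ≠ 0`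
on `I` for `3 ≤ i ≤ n-3`, and let `a₁,…,a₍ₙ₋₄₎` be the associated functions defined by
`a₁ = 0`, `a₂ = 1/k₃`, `a₃ = -k₃′/(k₃² k₄)`,
`a₍ᵢ₋₁₎ = (a₍ᵢ₋₂₎′ + a₍ᵢ₋₃₎ k₍ᵢ₋₁₎)/kᵢ` for `5 ≤ i ≤ n-3`.
If `∑_{i=2}^{n-4} aᵢ²` is constant on `I`, then
`a₍ₙ₋₄₎ (a₍ₙ₋₄₎′ + k₍ₙ₋₃₎ a₍ₙ₋₅₎) = 0` on `I`. -/
theorem telescoping_identity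
    (n : ℕ) (hn : 8 ≤ n) (I : Set ℝ) (hI : IsOpen I)
    (k a : ℕ → ℝ → ℝ)
    (hks : ∀ i, ContDiff ℝ (⊤ : ℕ∞) (k i)) (has : ∀ i, ContDiff ℝ (⊤ : ℕ∞) (a i))
    (hknz : ∀ i, 3 ≤ i → i ≤ n - 3 → ∀ t ∈ I, k i t ≠ 0)
    -- the associated functions a₁,…,a₍ₙ₋₄₎
    (ha1 : ∀ t ∈ I, a 1 t = 0)
    (ha2 : ∀ t ∈ I, a 2 t = 1 / k 3 t)
    (ha3 : ∀ t ∈ I, a 3 t = -(deriv (k 3) t) / ((k 3 t) ^ 2 * k 4 t))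
    (hai : ∀ i, 5 ≤ i → i ≤ n - 3 → ∀ t ∈ I,
      a (i - 1) t = (deriv (a (i - 2)) t + a (i - 3) t * k (i - 1) t) / k i t)
    -- the sum of squares is constant on I
    (C : ℝ) (hconst : ∀ t ∈ I, ∑ i ∈ Finset.Icc 2 (n - 4), (a i t) ^ 2 = C) :
    ∀ t ∈ I, a (n - 4) t * (deriv (a (n - 4)) t + k (n - 3) t * a (n - 5) t) = 0 := by
  obtain ⟨m, rfl⟩ : ∃ m, n = m + 8 := ⟨n - 8, by omega⟩
  rw [show m + 8 - 3 = m + 5 by omega] at hknz hai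
  rw [show m + 8 - 4 = m + 4 by omega] at hconst
  rw [show m + 8 - 4 = m + 4 by omega, show m + 8 - 3 = m + 5 by omega,
    show m + 8 - 5 = m + 3 by omega]
  intro t ht
  have hk : ∀ i, 3 ≤ i → i ≤ m + 5 → k i t ≠ 0 := fun i h1 h2 => hknz i h1 h2 t ht
  have hda : ∀ i, DifferentiableAt ℝ (a i) t :=
    fun i => ((has i).differentiable (by simp)).differentiableAt
  have hdk : ∀ i, DifferentiableAt ℝ (k i) t :=
    fun i => ((hks i).differentiable (by simp)).differentiableAt
  -- Step A: the sum of a_i a_i' vanishes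
  have hsum0 : ∑ i ∈ Finset.Icc 2 (m + 4), a i t * deriv (a i) t = 0 := by
    have hf : HasDerivAt (fun s => ∑ i ∈ Finset.Icc 2 (m + 4), a i s ^ 2)
        (∑ i ∈ Finset.Icc 2 (m + 4), (2 : ℝ) * a i t ^ 1 * deriv (a i) t) t := by
      apply HasDerivAt.fun_sum
      intro i _
      simpa using ((hda i).hasDerivAt).fun_pow 2
    have heq : (fun s => ∑ i ∈ Finset.Icc 2 (m + 4), a i s ^ 2) =ᶠ[nhds t]
        (fun _ => C) :=
      Filter.eventuallyEq_of_mem (hI.mem_nhds ht) (fun x hx => hconst x hx)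
    have h0 : (∑ i ∈ Finset.Icc 2 (m + 4), (2 : ℝ) * a i t ^ 1 * deriv (a i) t) = 0 := by
      rw [← hf.deriv, heq.deriv_eq, deriv_const]
    have h2 : (2 : ℝ) * ∑ i ∈ Finset.Icc 2 (m + 4), a i t * deriv (a i) t = 0 := by
      rw [Finset.mul_sum]
      rw [← h0]
      exact Finset.sum_congr rfl (fun i _ => by ring)
    linarith
  -- Step B: derivative recursion
  have hderiv : ∀ j, 2 ≤ j → j ≤ m + 3 →
      deriv (a j) t = a (j + 1) t * k (j + 2) t - a (j - 1) t * k (j + 1) t := by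
    intro j hj1 hj2
    rcases eq_or_lt_of_le hj1 with h2 | h3
    · -- j = 2
      subst h2
      have hk3 : k 3 t ≠ 0 := hk 3 (by omega) (by omega)
      have hk4 : k 4 t ≠ 0 := hk 4 (by omega) (by omega)
      have heq2 : a 2 =ᶠ[nhds t] (fun s => 1 / k 3 s) :=
        Filter.eventuallyEq_of_mem (hI.mem_nhds ht) (fun x hx => ha2 x hx)
      have hd : HasDerivAt (fun s => 1 / k 3 s)
          ((0 * k 3 t - 1 * deriv (k 3) t) / (k 3 t) ^ 2) t :=
        (hasDerivAt_const t (1 : ℝ)).div ((hdk 3).hasDerivAt) hk3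
      rw [heq2.deriv_eq, hd.deriv, ha1 t ht, ha3 t ht]
      field_simp
      ring
    · -- j ≥ 3
      have h5 : 5 ≤ j + 2 := by omega
      have hle : j + 2 ≤ m + 5 := by omega
      have := hai (j + 2) h5 hle t ht
      simp only [show j + 2 - 1 = j + 1 from rfl, show j + 2 - 2 = j from rfl,
        show j + 2 - 3 = j - 1 by omega] at this
      have hkj : k (j + 2) t ≠ 0 := hk (j + 2) (by omega) hle
      field_simp at this
      linarith
  -- Step C: telescoping
  set F : ℕ → ℝ := fun j => a (j - 1) t * a j t * k (j + 1) t with hF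
  have htel : ∑ j ∈ Finset.Icc 2 (m + 3), a j t * deriv (a j) t = F (m + 4) - F 2 := by
    have : ∑ j ∈ Finset.Icc 2 (m + 3), a j t * deriv (a j) t
        = ∑ j ∈ Finset.Icc 2 (m + 3), (F (j + 1) - F j) := by
      apply Finset.sum_congr rfl
      intro j hj
      simp only [Finset.mem_Icc] at hj
      rw [hderiv j hj.1 hj.2, hF]
      simp only [show j + 1 - 1 = j from rfl]
      ring
    rw [this, show m + 3 = 2 + (m + 1) by omega, tele_aux F (m + 1),
      show 2 + (m + 1) + 1 = m + 4 by omega]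
  -- Step D: combine
  have hsplit : ∑ i ∈ Finset.Icc 2 (m + 4), a i t * deriv (a i) t
      = (∑ j ∈ Finset.Icc 2 (m + 3), a j t * deriv (a j) t)
        + a (m + 4) t * deriv (a (m + 4)) t := by
    rw [show m + 4 = (m + 3) + 1 by omega,
      Finset.sum_Icc_succ_top (by omega : 2 ≤ m + 3 + 1)]
  have hF2 : F 2 = 0 := by
    simp only [hF]
    rw [show (2 : ℕ) - 1 = 1 from rfl, ha1 t ht]
    ring
  have hFm : F (m + 4) = a (m + 3) t * a (m + 4) t * k (m + 5) t := by
    simp only [hF]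
    congr 1
  rw [hsplit, htel, hF2, hFm] at hsum0
  nlinarith [hsum0]
end

section
/- Let α : I → R⁶₂ be a null Cartan curve with degeneration degree two, nullity degree sequence {0,1,2,2,1,0,0}, Cartan frame {L₁, L₂, W₃, N₂, N₁, W₄} and curvatures k₁, k₂, k₃, parametrized by pseudo-arc t, with k₃(t) ≠ 0 and (1/k₃)′(t) ≠ 0 for all t. Then the evolute E(t) = α(t) + (1/k₃(t))·W₄(t) satisfies E′(t) = (1/k₃)′(t)·W₄(t) for all t; in particular ⟨E′(t), E′(t)⟩ = ((1/k₃)′(t))² > 0, so E is a spacelike curve in R⁶₂. -/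
lemma mInner_smul_smul {n : ℕ} (c : ℝ) (x y : Fin n → ℝ) :
    mInner (c • x) (c • y) = c ^ 2 * mInner x y := by
  simp only [mInner, Pi.smul_apply, smul_eq_mul, Finset.mul_sum]
  exact Finset.sum_congr rfl (fun i _ => by ring)

/-- **The evolute of a null Cartan curve in R⁶₂ is spacelike.**
For a null Cartan curve `α` in `R⁶₂` (degeneration degree two, nullity degree sequence
`{0,1,2,2,1,0,0}`) with `k₃ ≠ 0` and `(1/k₃)′ ≠ 0` on `I`, the evolute
`E(t) = α(t) + (1/k₃(t)) • W₄(t)` satisfies `E′(t) = (1/k₃)′(t) • W₄(t)`, hence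
`⟨E′,E′⟩ = ((1/k₃)′)² > 0` and `E` is spacelike. -/
theorem evolute_is_spacelike
    (I : Set ℝ) (hI : IsOpen I)
    (α L1 L2 W3 N2 N1 W4 : ℝ → Fin 6 → ℝ) (k1 k2 k3 : ℝ → ℝ)
    -- smoothness
    (hαs : ContDiff ℝ (⊤ : ℕ∞) α) (hL1s : ContDiff ℝ (⊤ : ℕ∞) L1) (hL2s : ContDiff ℝ (⊤ : ℕ∞) L2)
    (hW3s : ContDiff ℝ (⊤ : ℕ∞) W3) (hN2s : ContDiff ℝ (⊤ : ℕ∞) N2) (hN1s : ContDiff ℝ (⊤ : ℕ∞) N1)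
    (hW4s : ContDiff ℝ (⊤ : ℕ∞) W4)
    (hk1s : ContDiff ℝ (⊤ : ℕ∞) k1) (hk2s : ContDiff ℝ (⊤ : ℕ∞) k2) (hk3s : ContDiff ℝ (⊤ : ℕ∞) k3)
    -- Cartan equations on I
    (hα : ∀ t ∈ I, deriv α t = L1 t)
    (hL1 : ∀ t ∈ I, deriv L1 t = L2 t)
    (hL2 : ∀ t ∈ I, deriv L2 t = W3 t)
    (hW3 : ∀ t ∈ I, deriv W3 t = -(k1 t) • L2 t + N2 t)
    (hN2 : ∀ t ∈ I, deriv N2 t = k2 t • L1 t + N1 t - k1 t • W3 t)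
    (hN1 : ∀ t ∈ I, deriv N1 t = k2 t • L2 t + k3 t • W4 t)
    (hW4 : ∀ t ∈ I, deriv W4 t = -(k3 t) • L1 t)
    -- metric relations of the Cartan frame
    (hL1L1 : ∀ t ∈ I, mInner (L1 t) (L1 t) = 0)
    (hL2L2 : ∀ t ∈ I, mInner (L2 t) (L2 t) = 0)
    (hN1N1 : ∀ t ∈ I, mInner (N1 t) (N1 t) = 0)
    (hN2N2 : ∀ t ∈ I, mInner (N2 t) (N2 t) = 0)
    (hL1N1 : ∀ t ∈ I, mInner (L1 t) (N1 t) = 1)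
    (hL2N2 : ∀ t ∈ I, mInner (L2 t) (N2 t) = -1)
    (hL1L2 : ∀ t ∈ I, mInner (L1 t) (L2 t) = 0)
    (hL1N2 : ∀ t ∈ I, mInner (L1 t) (N2 t) = 0)
    (hL2N1 : ∀ t ∈ I, mInner (L2 t) (N1 t) = 0)
    (hN1N2 : ∀ t ∈ I, mInner (N1 t) (N2 t) = 0)
    (hW3W3 : ∀ t ∈ I, mInner (W3 t) (W3 t) = 1)
    (hW4W4 : ∀ t ∈ I, mInner (W4 t) (W4 t) = 1)
    (hW3W4 : ∀ t ∈ I, mInner (W3 t) (W4 t) = 0)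
    (hW3L1 : ∀ t ∈ I, mInner (W3 t) (L1 t) = 0)
    (hW3L2 : ∀ t ∈ I, mInner (W3 t) (L2 t) = 0)
    (hW3N1 : ∀ t ∈ I, mInner (W3 t) (N1 t) = 0)
    (hW3N2 : ∀ t ∈ I, mInner (W3 t) (N2 t) = 0)
    (hW4L1 : ∀ t ∈ I, mInner (W4 t) (L1 t) = 0)
    (hW4L2 : ∀ t ∈ I, mInner (W4 t) (L2 t) = 0)
    (hW4N1 : ∀ t ∈ I, mInner (W4 t) (N1 t) = 0)
    (hW4N2 : ∀ t ∈ I, mInner (W4 t) (N2 t) = 0)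
    -- k₃ never vanishes on I
    (hk3nz : ∀ t ∈ I, k3 t ≠ 0)
    (hk3' : ∀ t ∈ I, deriv (fun u => 1 / k3 u) t ≠ 0)
    -- the evolute
    (E : ℝ → Fin 6 → ℝ) (hE : ∀ t, E t = α t + (1 / k3 t) • W4 t) :
    ∀ t ∈ I,
      deriv E t = (deriv (fun u => 1 / k3 u) t) • W4 t ∧
      mInner (deriv E t) (deriv E t) = (deriv (fun u => 1 / k3 u) t) ^ 2 ∧
      0 < mInner (deriv E t) (deriv E t) := by

  intro t ht
  have hk3t := hk3nz t ht
  -- derivative of 1/k3 at t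
  have hc : HasDerivAt (fun u => 1 / k3 u) (deriv (fun u => 1 / k3 u) t) t := by
    apply DifferentiableAt.hasDerivAt
    exact (differentiableAt_const (1:ℝ)).div (hk3s.differentiable (by simp) t) hk3t
  have hW4t : HasDerivAt W4 (-(k3 t) • L1 t) t := by
    have := (hW4s.differentiable (by simp) t).hasDerivAt
    rwa [hW4 t ht] at this
  have hαt : HasDerivAt α (L1 t) t := by
    have := (hαs.differentiable (by simp) t).hasDerivAt
    rwa [hα t ht] at this
  have hsm : HasDerivAt (fun u => (1 / k3 u) • W4 u)
      ((1 / k3 t) • (-(k3 t) • L1 t) + (deriv (fun u => 1 / k3 u) t) • W4 t) t :=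
    hc.smul hW4t
  have hEt : HasDerivAt E ((deriv (fun u => 1 / k3 u) t) • W4 t) t := by
    have h : HasDerivAt (fun u => α u + (1 / k3 u) • W4 u) (L1 t + ((1 / k3 t) • (-(k3 t) • L1 t) + (deriv (fun u => 1 / k3 u) t) • W4 t)) t := hαt.add hsm
    have hfun : E = fun u => α u + (1 / k3 u) • W4 u := funext hE
    rw [hfun]
    convert h using 1
    have : (1 / k3 t) • (-(k3 t) • L1 t) = -(L1 t) := by
      rw [smul_smul]
      field_simp
      exact neg_one_smul ℝ _
    rw [this]
    abel
  have hderiv : deriv E t = (deriv (fun u => 1 / k3 u) t) • W4 t := hEt.deriv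
  refine ⟨hderiv, ?_, ?_⟩
  · rw [hderiv, mInner_smul_smul, hW4W4 t ht, mul_one]
  · rw [hderiv, mInner_smul_smul, hW4W4 t ht, mul_one]
    exact pow_pos (abs_pos.mpr (hk3' t ht)) 2 |>.trans_eq (sq_abs _)
end

section
/- Let α : I → R⁶₂ be a null Cartan curve with degeneration degree two, nullity degree sequence {0,1,2,2,1,0,0}, Cartan frame {L₁, L₂, W₃, N₂, N₁, W₄} and curvatures k₁, k₂, k₃, with k₃(t) ≠ 0 and (1/k₃)′(t) > 0 for all t, and fix t₀ ∈ I. Then the evolute E(t) = α(t) + (1/k₃(t))·W₄(t) is a spacelike curve whose unit tangent is T_E(t) = W₄(t), its arc length from E(t₀) is s_E(t) = ∫_{t₀}^{t} |E′| dt = 1/k₃(t) − 1/k₃(t₀), and the involute of E satisfies E(t) − (s_E(t) + 1/k₃(t₀))·T_E(t) = α(t) for all t ∈ I; that is, the involute of the evolute of α coincides with α. -/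
/-- **The involute of the evolute of a null Cartan curve in R⁶₂ recovers the curve.**
For a null Cartan curve `α` in `R⁶₂` (degeneration degree two, nullity degree sequence
`{0,1,2,2,1,0,0}`) with `k₃ ≠ 0` and `(1/k₃)′ > 0` on `I`, and `t₀ ∈ I`, the evolute
`E(t) = α(t) + (1/k₃(t)) • W₄(t)` is spacelike with unit tangent `W₄`, its arc length
from `E(t₀)` is `s_E(t) = ∫_{t₀}^{t} |E′| = 1/k₃(t) - 1/k₃(t₀)`, and
`E(t) - (s_E(t) + 1/k₃(t₀)) • W₄(t) = α(t)`: the involute of `E` coincides with `α`. -/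
theorem involute_of_evolute
    (I : Set ℝ) (hI : IsOpen I) (hIconn : I.OrdConnected)
    (α L1 L2 W3 N2 N1 W4 : ℝ → Fin 6 → ℝ) (k1 k2 k3 : ℝ → ℝ)
    -- smoothness
    (hαs : ContDiff ℝ (⊤ : ℕ∞) α) (hL1s : ContDiff ℝ (⊤ : ℕ∞) L1) (hL2s : ContDiff ℝ (⊤ : ℕ∞) L2)
    (hW3s : ContDiff ℝ (⊤ : ℕ∞) W3) (hN2s : ContDiff ℝ (⊤ : ℕ∞) N2) (hN1s : ContDiff ℝ (⊤ : ℕ∞) N1)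
    (hW4s : ContDiff ℝ (⊤ : ℕ∞) W4)
    (hk1s : ContDiff ℝ (⊤ : ℕ∞) k1) (hk2s : ContDiff ℝ (⊤ : ℕ∞) k2) (hk3s : ContDiff ℝ (⊤ : ℕ∞) k3)
    -- Cartan equations on I
    (hα : ∀ t ∈ I, deriv α t = L1 t)
    (hL1 : ∀ t ∈ I, deriv L1 t = L2 t)
    (hL2 : ∀ t ∈ I, deriv L2 t = W3 t)
    (hW3 : ∀ t ∈ I, deriv W3 t = -(k1 t) • L2 t + N2 t)
    (hN2 : ∀ t ∈ I, deriv N2 t = k2 t • L1 t + N1 t - k1 t • W3 t)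
    (hN1 : ∀ t ∈ I, deriv N1 t = k2 t • L2 t + k3 t • W4 t)
    (hW4 : ∀ t ∈ I, deriv W4 t = -(k3 t) • L1 t)
    -- metric relations of the Cartan frame
    (hL1L1 : ∀ t ∈ I, mInner (L1 t) (L1 t) = 0)
    (hL2L2 : ∀ t ∈ I, mInner (L2 t) (L2 t) = 0)
    (hN1N1 : ∀ t ∈ I, mInner (N1 t) (N1 t) = 0)
    (hN2N2 : ∀ t ∈ I, mInner (N2 t) (N2 t) = 0)
    (hL1N1 : ∀ t ∈ I, mInner (L1 t) (N1 t) = 1)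
    (hL2N2 : ∀ t ∈ I, mInner (L2 t) (N2 t) = -1)
    (hL1L2 : ∀ t ∈ I, mInner (L1 t) (L2 t) = 0)
    (hL1N2 : ∀ t ∈ I, mInner (L1 t) (N2 t) = 0)
    (hL2N1 : ∀ t ∈ I, mInner (L2 t) (N1 t) = 0)
    (hN1N2 : ∀ t ∈ I, mInner (N1 t) (N2 t) = 0)
    (hW3W3 : ∀ t ∈ I, mInner (W3 t) (W3 t) = 1)
    (hW4W4 : ∀ t ∈ I, mInner (W4 t) (W4 t) = 1)
    (hW3W4 : ∀ t ∈ I, mInner (W3 t) (W4 t) = 0)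
    (hW3L1 : ∀ t ∈ I, mInner (W3 t) (L1 t) = 0)
    (hW3L2 : ∀ t ∈ I, mInner (W3 t) (L2 t) = 0)
    (hW3N1 : ∀ t ∈ I, mInner (W3 t) (N1 t) = 0)
    (hW3N2 : ∀ t ∈ I, mInner (W3 t) (N2 t) = 0)
    (hW4L1 : ∀ t ∈ I, mInner (W4 t) (L1 t) = 0)
    (hW4L2 : ∀ t ∈ I, mInner (W4 t) (L2 t) = 0)
    (hW4N1 : ∀ t ∈ I, mInner (W4 t) (N1 t) = 0)
    (hW4N2 : ∀ t ∈ I, mInner (W4 t) (N2 t) = 0)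
    -- k₃ never vanishes on I
    (hk3nz : ∀ t ∈ I, k3 t ≠ 0)
    (hk3' : ∀ t ∈ I, 0 < deriv (fun u => 1 / k3 u) t)
    (t₀ : ℝ) (ht₀ : t₀ ∈ I)
    -- the evolute and its arc length from E(t₀)
    (E : ℝ → Fin 6 → ℝ) (hE : ∀ t, E t = α t + (1 / k3 t) • W4 t)
    (sE : ℝ → ℝ)
    (hsE : ∀ t, sE t = ∫ u in t₀..t, Real.sqrt (mInner (deriv E u) (deriv E u))) :
    ∀ t ∈ I,
      deriv E t = (deriv (fun u => 1 / k3 u) t) • W4 t ∧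
      0 < mInner (deriv E t) (deriv E t) ∧
      sE t = 1 / k3 t - 1 / k3 t₀ ∧
      E t - (sE t + 1 / k3 t₀) • W4 t = α t := by
  have hk3d : Differentiable ℝ k3 := hk3s.differentiable (by simp)
  set f : ℝ → ℝ := fun u => 1 / k3 u with hf_def
  have hfd : ∀ u ∈ I, HasDerivAt f (deriv f u) u := by
    intro u hu
    exact (((differentiable_const (1:ℝ)) u).div (hk3d u) (hk3nz u hu)).hasDerivAt
  have hEfun : E = fun t => α t + f t • W4 t := funext hE
  have hEderiv : ∀ t ∈ I, HasDerivAt E (deriv f t • W4 t) t := by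
    intro t ht
    have hα' : HasDerivAt α (L1 t) t := by
      have h := (hαs.differentiable (by simp) t).hasDerivAt
      rwa [hα t ht] at h
    have hW4' : HasDerivAt W4 (-(k3 t) • L1 t) t := by
      have h := (hW4s.differentiable (by simp) t).hasDerivAt
      rwa [hW4 t ht] at h
    have hcomb := hα'.add ((hfd t ht).smul hW4')
    rw [hEfun]
    convert hcomb using 1
    · rfl
    · rfl
    · rfl
    · rfl
    have hft : f t * k3 t = 1 := by
      simp only [hf_def]
      field_simp [hk3nz t ht]
    have : f t • (-(k3 t) • L1 t) = -L1 t := by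
      rw [smul_smul]
      have : f t * -k3 t = -1 := by rw [mul_neg, hft]
      rw [this]; simp
    rw [this]
    module
  intro t ht
  have hdE : deriv E t = deriv f t • W4 t := (hEderiv t ht).deriv
  have hpos := hk3' t ht
  refine ⟨hdE, ?_, ?_, ?_⟩
  · rw [hdE, mInner_smul_smul, hW4W4 t ht, mul_one]
    exact pow_pos hpos 2
  · -- arc length
    have hsub : Set.uIcc t₀ t ⊆ I := hIconn.uIcc_subset ht₀ ht
    have hcongr : Set.EqOn (fun u => Real.sqrt (mInner (deriv E u) (deriv E u)))
        (deriv f) (Set.uIcc t₀ t) := by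
      intro u hu
      have huI := hsub hu
      have h1 : deriv E u = deriv f u • W4 u := (hEderiv u huI).deriv
      have h2 := hk3' u huI
      simp only [h1, mInner_smul_smul, hW4W4 u huI, mul_one]
      exact Real.sqrt_sq h2.le
    have hderivk3cont : Continuous (deriv k3) := hk3s.continuous_deriv (by simp)
    have hcontf' : ContinuousOn (deriv f) (Set.uIcc t₀ t) := by
      have heq : Set.EqOn (deriv f)
          (fun u => ((0 : ℝ) * k3 u - 1 * deriv k3 u) / (k3 u) ^ 2) (Set.uIcc t₀ t) := by
        intro u hu
        have huI := hsub hu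
        exact (((hasDerivAt_const u (1:ℝ)).div (hk3d u).hasDerivAt (hk3nz u huI))).deriv
      have hcont : ContinuousOn
          (fun u => ((0 : ℝ) * k3 u - 1 * deriv k3 u) / (k3 u) ^ 2) (Set.uIcc t₀ t) := by
        apply ContinuousOn.div
        · exact (continuous_const.mul hk3s.continuous).sub
            (continuous_const.mul hderivk3cont) |>.continuousOn
        · exact (hk3s.continuous.pow 2).continuousOn
        · intro u hu
          exact pow_ne_zero 2 (hk3nz u (hsub hu))
      exact hcont.congr heq
    have hint : IntervalIntegrable (deriv f) MeasureTheory.volume t₀ t :=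
      hcontf'.intervalIntegrable
    rw [hsE, intervalIntegral.integral_congr hcongr,
      intervalIntegral.integral_eq_sub_of_hasDerivAt (fun u hu => hfd u (hsub hu)) hint]
  · -- involute
    have hsub : Set.uIcc t₀ t ⊆ I := hIconn.uIcc_subset ht₀ ht
    have hcongr : Set.EqOn (fun u => Real.sqrt (mInner (deriv E u) (deriv E u)))
        (deriv f) (Set.uIcc t₀ t) := by
      intro u hu
      have huI := hsub hu
      have h1 : deriv E u = deriv f u • W4 u := (hEderiv u huI).deriv
      have h2 := hk3' u huI
      simp only [h1, mInner_smul_smul, hW4W4 u huI, mul_one]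
      exact Real.sqrt_sq h2.le
    have hderivk3cont : Continuous (deriv k3) := hk3s.continuous_deriv (by simp)
    have hcontf' : ContinuousOn (deriv f) (Set.uIcc t₀ t) := by
      have heq : Set.EqOn (deriv f)
          (fun u => ((0 : ℝ) * k3 u - 1 * deriv k3 u) / (k3 u) ^ 2) (Set.uIcc t₀ t) := by
        intro u hu
        have huI := hsub hu
        exact (((hasDerivAt_const u (1:ℝ)).div (hk3d u).hasDerivAt (hk3nz u huI))).deriv
      have hcont : ContinuousOn
          (fun u => ((0 : ℝ) * k3 u - 1 * deriv k3 u) / (k3 u) ^ 2) (Set.uIcc t₀ t) := by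
        apply ContinuousOn.div
        · exact (continuous_const.mul hk3s.continuous).sub
            (continuous_const.mul hderivk3cont) |>.continuousOn
        · exact (hk3s.continuous.pow 2).continuousOn
        · intro u hu
          exact pow_ne_zero 2 (hk3nz u (hsub hu))
      exact hcont.congr heq
    have hint : IntervalIntegrable (deriv f) MeasureTheory.volume t₀ t :=
      hcontf'.intervalIntegrable
    have hsEt : sE t = f t - f t₀ := by
      rw [hsE, intervalIntegral.integral_congr hcongr,
        intervalIntegral.integral_eq_sub_of_hasDerivAt (fun u hu => hfd u (hsub hu)) hint]
    rw [hE t, hsEt]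
    have : f t - f t₀ + 1 / k3 t₀ = f t := by simp [hf_def]
    rw [this]
    module
end

section
/- Let c : I → R⁶₂ be a smooth curve parametrized by arc length s with ⟨c′,c′⟩ = 1, ⟨c″,c″⟩ = 0, ⟨c‴,c‴⟩ = 0, ⟨c⁗(s),c⁗(s)⟩ > 0 for all s, and suppose {c″(s), c‴(s), c⁗(s), c⁽⁵⁾(s), c⁽⁶⁾(s)} is linearly independent for each s. Then for s > 0 the involute I(s) = c(s) − s·c′(s) satisfies: I′(s) = −s·c″(s) ≠ 0, ⟨I′(s), I′(s)⟩ = 0 (so I is a null curve), ⟨I‴(s), I‴(s)⟩ = s²·⟨c⁗(s), c⁗(s)⟩ > 0, and {I′(s), I″(s), I‴(s), I⁽⁴⁾(s), I⁽⁵⁾(s)} is linearly independent. -/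
lemma mInner_expand {n : ℕ} (a b : ℝ) (x y : Fin n → ℝ) :
    mInner (a • x + b • y) (a • x + b • y)
      = a ^ 2 * mInner x x + 2 * (a * b) * mInner x y + b ^ 2 * mInner y y := by
  simp only [mInner, Pi.add_apply, Pi.smul_apply, smul_eq_mul, Finset.mul_sum,
    ← Finset.sum_add_distrib]
  exact Finset.sum_congr rfl fun i _ => by ring

lemma mInner_smul_sq {n : ℕ} (a : ℝ) (x : Fin n → ℝ) :
    mInner (a • x) (a • x) = a ^ 2 * mInner x x := by
  simp only [mInner, Pi.smul_apply, smul_eq_mul, Finset.mul_sum]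
  exact Finset.sum_congr rfl fun i _ => by ring

lemma hasDerivAt_iter {c : ℝ → Fin 6 → ℝ} (hcs : ContDiff ℝ (⊤ : ℕ∞) c) (n : ℕ) (t : ℝ) :
    HasDerivAt (deriv^[n] c) (deriv^[n + 1] c t) t := by
  have h := ((((hcs.of_le (by simp)).iterate_deriv n).differentiable (by simp)).differentiableAt
    (x := t)).hasDerivAt
  rwa [show deriv^[n + 1] c t = deriv (deriv^[n] c) t from
    congrFun (Function.iterate_succ_apply' deriv n c) t]

/-- **The involute of a suitable spacelike curve in R⁶₂ is a (null) Cartan curve.**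
Let `c` be a smooth curve in `R⁶₂` parametrized by arc length with `⟨c′,c′⟩ = 1`,
`⟨c″,c″⟩ = 0`, `⟨c‴,c‴⟩ = 0`, `⟨c⁗,c⁗⟩ > 0`, and `{c″,c‴,c⁗,c⁽⁵⁾,c⁽⁶⁾}` linearly
independent.  Then for `s > 0` the involute `I(s) = c(s) - s • c′(s)` satisfies
`I′ = -s • c″ ≠ 0`, `⟨I′,I′⟩ = 0`, `⟨I‴,I‴⟩ = s²⟨c⁗,c⁗⟩ > 0`, and
`{I′,I″,I‴,I⁽⁴⁾,I⁽⁵⁾}` is linearly independent. -/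
theorem involute_is_nullCartan
    (I : Set ℝ) (hI : IsOpen I)
    (c : ℝ → Fin 6 → ℝ) (hcs : ContDiff ℝ (⊤ : ℕ∞) c)
    (hc1 : ∀ s ∈ I, mInner (deriv c s) (deriv c s) = 1)
    (hc2 : ∀ s ∈ I, mInner (deriv^[2] c s) (deriv^[2] c s) = 0)
    (hc3 : ∀ s ∈ I, mInner (deriv^[3] c s) (deriv^[3] c s) = 0)
    (hc4 : ∀ s ∈ I, 0 < mInner (deriv^[4] c s) (deriv^[4] c s))
    (hli : ∀ s ∈ I, LinearIndependent ℝ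
      ![deriv^[2] c s, deriv^[3] c s, deriv^[4] c s, deriv^[5] c s, deriv^[6] c s])
    (Inv : ℝ → Fin 6 → ℝ) (hInv : ∀ s, Inv s = c s - s • deriv c s) :
    ∀ s ∈ I, 0 < s →
      deriv Inv s = (-s) • deriv^[2] c s ∧
      deriv Inv s ≠ 0 ∧
      mInner (deriv Inv s) (deriv Inv s) = 0 ∧
      mInner (deriv^[3] Inv s) (deriv^[3] Inv s)
        = s ^ 2 * mInner (deriv^[4] c s) (deriv^[4] c s) ∧
      0 < mInner (deriv^[3] Inv s) (deriv^[3] Inv s) ∧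
      LinearIndependent ℝ
        ![deriv Inv s, deriv^[2] Inv s, deriv^[3] Inv s, deriv^[4] Inv s, deriv^[5] Inv s] := by
  intro s hs hspos
  have hD : ∀ (n : ℕ) (t : ℝ), HasDerivAt (deriv^[n] c) (deriv^[n + 1] c t) t :=
    fun n t => hasDerivAt_iter hcs n t
  -- first derivative of the involute
  have hI1 : ∀ t : ℝ, HasDerivAt Inv ((-t) • deriv^[2] c t) t := by
    intro t
    have hInvEq : Inv = fun u => c u - u • deriv^[1] c u := by
      funext u; simp [hInv u]
    have h2 := (hasDerivAt_id t).fun_smul (hD 1 t)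
    have h0 : HasDerivAt c (deriv^[1] c t) t := hD 0 t
    have h := h0.fun_sub h2
    simp only [id_eq] at h
    rw [hInvEq]
    refine h.congr_deriv ?_
    module
  have E1 : deriv Inv = fun t => (0 : ℝ) • deriv^[1] c t + (-t) • deriv^[2] c t := by
    funext t
    rw [(hI1 t).deriv]
    module
  -- generic differentiation step
  have step : ∀ (a : ℝ) (n : ℕ) (t : ℝ),
      HasDerivAt (fun u => a • deriv^[n] c u + (-u) • deriv^[n + 1] c u)
        ((a - 1) • deriv^[n + 1] c t + (-t) • deriv^[n + 2] c t) t := by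
    intro a n t
    have h1 := (hD n t).fun_const_smul a
    have h2 := ((hasDerivAt_id t).fun_neg).fun_smul (hD (n + 1) t)
    have h := h1.fun_add h2
    simp only [id_eq] at h
    refine h.congr_deriv ?_
    module
  have E2 : deriv^[2] Inv = fun t => (-1 : ℝ) • deriv^[2] c t + (-t) • deriv^[3] c t := by
    funext t
    rw [show deriv^[2] Inv t = deriv (deriv^[1] Inv) t from
      congrFun (Function.iterate_succ_apply' deriv 1 Inv) t]
    rw [Function.iterate_one, E1]
    exact ((step 0 1 t).deriv).trans (by norm_num)
  have E3 : deriv^[3] Inv = fun t => (-2 : ℝ) • deriv^[3] c t + (-t) • deriv^[4] c t := by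
    funext t
    rw [show deriv^[3] Inv t = deriv (deriv^[2] Inv) t from
      congrFun (Function.iterate_succ_apply' deriv 2 Inv) t]
    rw [E2]
    exact ((step (-1) 2 t).deriv).trans (by norm_num)
  have E4 : deriv^[4] Inv = fun t => (-3 : ℝ) • deriv^[4] c t + (-t) • deriv^[5] c t := by
    funext t
    rw [show deriv^[4] Inv t = deriv (deriv^[3] Inv) t from
      congrFun (Function.iterate_succ_apply' deriv 3 Inv) t]
    rw [E3]
    exact ((step (-2) 3 t).deriv).trans (by norm_num)
  have E5 : deriv^[5] Inv = fun t => (-4 : ℝ) • deriv^[5] c t + (-t) • deriv^[6] c t := by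
    funext t
    rw [show deriv^[5] Inv t = deriv (deriv^[4] Inv) t from
      congrFun (Function.iterate_succ_apply' deriv 4 Inv) t]
    rw [E4]
    exact ((step (-3) 4 t).deriv).trans (by norm_num)
  -- orthogonality ⟨c‴, c⁗⟩ = 0 on I
  have hphi : ∀ t : ℝ, HasDerivAt (fun u => mInner (deriv^[3] c u) (deriv^[3] c u))
      (2 * mInner (deriv^[3] c t) (deriv^[4] c t)) t := by
    intro t
    have hcomp : ∀ (n : ℕ) (i : Fin 6),
        HasDerivAt (fun u => deriv^[n] c u i) (deriv^[n + 1] c t i) t :=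
      fun n i => hasDerivAt_pi.mp (hD n t) i
    have h : HasDerivAt (fun u => ∑ i : Fin 6,
        (if (i : ℕ) < 2 then (-1 : ℝ) else 1) * deriv^[3] c u i * deriv^[3] c u i)
        (∑ i : Fin 6,
          (((if (i : ℕ) < 2 then (-1 : ℝ) else 1) * deriv^[4] c t i) * deriv^[3] c t i +
           ((if (i : ℕ) < 2 then (-1 : ℝ) else 1) * deriv^[3] c t i) * deriv^[4] c t i)) t :=
      HasDerivAt.fun_sum fun i _ =>
        (((hcomp 3 i).const_mul _).fun_mul (hcomp 3 i))
    refine h.congr_deriv ?_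
    simp only [mInner, Finset.mul_sum]
    exact Finset.sum_congr rfl fun i _ => by ring
  have horth : mInner (deriv^[3] c s) (deriv^[4] c s) = 0 := by
    have heq : (fun u => mInner (deriv^[3] c u) (deriv^[3] c u)) =ᶠ[nhds s]
        (fun _ => (0 : ℝ)) :=
      Filter.eventuallyEq_of_mem (hI.mem_nhds hs) fun t ht => hc3 t ht
    have h1 := (hphi s).deriv
    rw [heq.deriv_eq, deriv_const] at h1
    linarith
  -- the second derivative is nonzero
  have hc2ne : deriv^[2] c s ≠ 0 := by
    have := (hli s hs).ne_zero 0
    simpa using this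
  have hsne : (-s : ℝ) ≠ 0 := neg_ne_zero.mpr (ne_of_gt hspos)
  have part1 : deriv Inv s = (-s) • deriv^[2] c s := (hI1 s).deriv
  refine ⟨part1, ?_, ?_, ?_, ?_, ?_⟩
  · rw [part1]
    exact smul_ne_zero hsne hc2ne
  · rw [part1, mInner_smul_sq, hc2 s hs, mul_zero]
  · rw [show deriv^[3] Inv s = (-2 : ℝ) • deriv^[3] c s + (-s) • deriv^[4] c s from
      congrFun E3 s, mInner_expand, hc3 s hs, horth]
    ring
  · rw [show deriv^[3] Inv s = (-2 : ℝ) • deriv^[3] c s + (-s) • deriv^[4] c s from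
      congrFun E3 s, mInner_expand, hc3 s hs, horth]
    have := hc4 s hs
    nlinarith [mul_pos (pow_pos hspos 2) this]
  · rw [Fintype.linearIndependent_iff]
    intro g hg
    have hw := Fintype.linearIndependent_iff.mp (hli s hs)
    simp only [Fin.sum_univ_five, Matrix.cons_val_zero, Matrix.cons_val_one, Matrix.head_cons,
      Matrix.cons_val_two, Matrix.tail_cons, Matrix.cons_val_three, Matrix.cons_val_four,
      E1, E2, E3, E4, E5] at hg
    have key : ∑ i : Fin 5,
        ![(-s) * g 0 - g 1, (-s) * g 1 - 2 * g 2, (-s) * g 2 - 3 * g 3,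
          (-s) * g 3 - 4 * g 4, (-s) * g 4] i •
        ![deriv^[2] c s, deriv^[3] c s, deriv^[4] c s, deriv^[5] c s, deriv^[6] c s] i = 0 := by
      simp only [Fin.sum_univ_five, Matrix.cons_val_zero, Matrix.cons_val_one, Matrix.head_cons,
        Matrix.cons_val_two, Matrix.tail_cons, Matrix.cons_val_three, Matrix.cons_val_four]
      rw [← hg]
      simp only [Function.iterate_one]
      module
    have hcoef := hw _ key
    have h0 := hcoef 0
    have h1 := hcoef 1
    have h2 := hcoef 2
    have h3 := hcoef 3
    have h4 := hcoef 4
    simp only [Matrix.cons_val_zero, Matrix.cons_val_one, Matrix.head_cons,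
      Matrix.cons_val_two, Matrix.tail_cons, Matrix.cons_val_three, Matrix.cons_val_four] at h0 h1 h2 h3 h4
    have hg4 : g 4 = 0 := by
      rcases mul_eq_zero.mp h4 with h | h
      · exact absurd h hsne
      · exact h
    have hg3 : g 3 = 0 := by
      rw [hg4] at h3
      rcases mul_eq_zero.mp (by linarith : (-s) * g 3 = 0) with h | h
      · exact absurd h hsne
      · exact h
    have hg2 : g 2 = 0 := by
      rw [hg3] at h2
      rcases mul_eq_zero.mp (by linarith : (-s) * g 2 = 0) with h | h
      · exact absurd h hsne
      · exact h
    have hg1 : g 1 = 0 := by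
      rw [hg2] at h1
      rcases mul_eq_zero.mp (by linarith : (-s) * g 1 = 0) with h | h
      · exact absurd h hsne
      · exact h
    have hg0 : g 0 = 0 := by
      rw [hg1] at h0
      rcases mul_eq_zero.mp (by linarith : (-s) * g 0 = 0) with h | h
      · exact absurd h hsne
      · exact h
    intro i
    fin_cases i <;> assumption
end
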